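/- arXiv:2312.01584 — 3 statements merged into one kernel-verified Lean document; each statement's English description precedes it below -/
import Mathlib

section
/- Let B : ℝ → ℝ be continuous, 1-periodic, positive. Then for all x, y ∈ ℝ, (ε ∫_{x/ε}^{y/ε} √(B(s)) ds)² converges as ε → 0 to |x−y|² (∫₀¹ √(B(s)) ds)². Moreover this convergence is uniform on compact subsets of ℝ². -/
/-!
The primitive of a continuous `T`-periodic `f` differs from `t ↦ (t / T) • ∫₀ᵀ f` by a continuous
`T`-periodic, hence bounded, function. Therefore
`ε • ∫_{x/ε}^{y/ε} f = ((y - x) / T) • ∫₀ᵀ f + O(ε)` uniformly in `(x, y)`, and squaring keeps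
the convergence locally uniform because the limit is continuous.
-/

open MeasureTheory intervalIntegral Filter Topology

namespace Function.Periodic

variable {E : Type*} [NormedAddCommGroup E] [NormedSpace ℝ E] {f : ℝ → E} {T : ℝ}

theorem periodic_intervalIntegral_sub_smul (hf : Periodic f T) (hT : T ≠ 0)
    (hfc : Continuous f) :
    Periodic (fun t => (∫ s in 0..t, f s) - (t / T) • ∫ s in 0..T, f s) T := by
  intro t
  have hstep : ∫ s in 0..t + T, f s = (∫ s in 0..t, f s) + ∫ s in 0..T, f s := by
    simpa using hf.intervalIntegral_add_eq_add 0 t hfc.intervalIntegrable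
  simp only [hstep, add_div, div_self hT, add_smul, one_smul]
  abel

theorem exists_norm_intervalIntegral_sub_smul_le (hf : Periodic f T) (hT : T ≠ 0)
    (hfc : Continuous f) :
    ∃ M, ∀ a b : ℝ, ‖(∫ s in a..b, f s) - ((b - a) / T) • ∫ s in 0..T, f s‖ ≤ M := by
  set g := fun t => (∫ s in 0..t, f s) - (t / T) • ∫ s in 0..T, f s
  have hgc : Continuous g :=
    (continuous_primitive hfc.intervalIntegrable 0).sub (by fun_prop)
  obtain ⟨C, hC⟩ := isBounded_iff_forall_norm_le.1 <|
    (hf.periodic_intervalIntegral_sub_smul hT hfc).isBounded_of_continuous hT hgc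
  refine ⟨C + C, fun a b => ?_⟩
  have hsplit : (∫ s in a..b, f s) - ((b - a) / T) • ∫ s in 0..T, f s = g b - g a := by
    rw [← integral_interval_sub_left (hfc.intervalIntegrable 0 b) (hfc.intervalIntegrable 0 a),
      sub_div, sub_smul]
    simp only [g]
    abel
  rw [hsplit]
  exact (norm_sub_le _ _).trans (add_le_add (hC _ ⟨b, rfl⟩) (hC _ ⟨a, rfl⟩))

theorem tendstoUniformly_smul_intervalIntegral_div (hf : Periodic f T) (hT : T ≠ 0)
    (hfc : Continuous f) :
    TendstoUniformly (fun ε (p : ℝ × ℝ) => ε • ∫ s in (p.1 / ε)..(p.2 / ε), f s)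
      (fun p => ((p.2 - p.1) / T) • ∫ s in 0..T, f s) (𝓝[≠] 0) := by
  obtain ⟨M, hM⟩ := hf.exists_norm_intervalIntegral_sub_smul_le hT hfc
  have hbound : ∀ ε ≠ 0, ∀ p : ℝ × ℝ, dist (((p.2 - p.1) / T) • ∫ s in 0..T, f s)
      (ε • ∫ s in (p.1 / ε)..(p.2 / ε), f s) ≤ |ε| * M := by
    intro ε hε p
    have hscale : ((p.2 - p.1) / T) • ∫ s in 0..T, f s
        = ε • (((p.2 / ε - p.1 / ε) / T) • ∫ s in 0..T, f s) := by
      rw [smul_smul]; congr 1; field_simp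
    rw [dist_comm, dist_eq_norm, hscale, ← smul_sub, norm_smul, Real.norm_eq_abs]
    exact mul_le_mul_of_nonneg_left (hM _ _) (abs_nonneg ε)
  have hsmall : Tendsto (fun ε : ℝ => |ε| * M) (𝓝[≠] 0) (𝓝 0) := by
    have : Tendsto (fun ε : ℝ => |ε| * M) (𝓝 0) (𝓝 (|0| * M)) :=
      (continuous_abs.mul continuous_const).tendsto 0
    simpa using this.mono_left nhdsWithin_le_nhds
  rw [Metric.tendstoUniformly_iff]
  intro δ hδ
  filter_upwards [self_mem_nhdsWithin, hsmall.eventually_lt_const hδ] with ε hε hεδ p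
  exact (hbound ε hε p).trans_lt hεδ

end Function.Periodic

theorem stmt1_general (B : ℝ → ℝ) (hBc : Continuous B) (hBper : Function.Periodic B 1) :
    (∀ x y : ℝ, Tendsto (fun ε : ℝ =>
        (ε * ∫ s in (x / ε)..(y / ε), Real.sqrt (B s)) ^ 2)
      (nhdsWithin 0 (Set.Ioi 0))
      (nhds (|x - y| ^ 2 * (∫ s in (0:ℝ)..1, Real.sqrt (B s)) ^ 2))) ∧
    (∀ K : Set (ℝ × ℝ), IsCompact K →
      TendstoUniformlyOn
        (fun ε (p : ℝ × ℝ) => (ε * ∫ s in (p.1 / ε)..(p.2 / ε), Real.sqrt (B s)) ^ 2)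
        (fun p => |p.1 - p.2| ^ 2 * (∫ s in (0:ℝ)..1, Real.sqrt (B s)) ^ 2)
        (nhdsWithin 0 (Set.Ioi 0)) K) := by
  have hper : Function.Periodic (fun s => Real.sqrt (B s)) 1 := fun s => by
    simp only [hBper s]
  have hconv : TendstoUniformly
      (fun ε (p : ℝ × ℝ) => ε * ∫ s in (p.1 / ε)..(p.2 / ε), Real.sqrt (B s))
      (fun p => ((p.2 - p.1) / 1) • ∫ s in (0:ℝ)..1, Real.sqrt (B s)) (𝓝[>] 0) :=
    fun u hu => (hper.tendstoUniformly_smul_intervalIntegral_div one_ne_zero hBc.sqrt u hu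
      ).filter_mono (nhdsWithin_mono 0 fun _ => ne_of_gt)
  have hlim : ∀ x y : ℝ, (((y - x) / 1) • ∫ s in (0:ℝ)..1, Real.sqrt (B s)) ^ 2
      = |x - y| ^ 2 * (∫ s in (0:ℝ)..1, Real.sqrt (B s)) ^ 2 := by
    intro x y; rw [smul_eq_mul, div_one, sq_abs]; ring
  refine ⟨fun x y => hlim x y ▸ (hconv.tendsto_at (x, y)).pow 2, fun K hK => ?_⟩
  have hsq := hconv.tendstoLocallyUniformly.fun_mul₀ hconv.tendstoLocallyUniformly
    (by fun_prop) (by fun_prop)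
  rw [tendstoLocallyUniformly_iff_forall_isCompact] at hsq
  simpa only [← sq, hlim] using hsq K hK

/-- Convergence of the rescaled one-dimensional geodesic distances
`(ε ∫_{x/ε}^{y/ε} √B)² → |x−y|² (∫₀¹ √B)²` as `ε → 0⁺`, pointwise and
uniformly on compact subsets of `ℝ²`. -/
theorem stmt1 (B : ℝ → ℝ) (hBc : Continuous B) (hBper : Function.Periodic B 1)
    (hBpos : ∀ s, 0 < B s) :
    (∀ x y : ℝ, Tendsto (fun ε : ℝ =>
        (ε * ∫ s in (x / ε)..(y / ε), Real.sqrt (B s)) ^ 2)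
      (nhdsWithin 0 (Set.Ioi 0))
      (nhds (|x - y| ^ 2 * (∫ s in (0:ℝ)..1, Real.sqrt (B s)) ^ 2))) ∧
    (∀ K : Set (ℝ × ℝ), IsCompact K →
      TendstoUniformlyOn
        (fun ε (p : ℝ × ℝ) => (ε * ∫ s in (p.1 / ε)..(p.2 / ε), Real.sqrt (B s)) ^ 2)
        (fun p => |p.1 - p.2| ^ 2 * (∫ s in (0:ℝ)..1, Real.sqrt (B s)) ^ 2)
        (nhdsWithin 0 (Set.Ioi 0)) K) :=
  stmt1_general B hBc hBper
end

section
/- Let A : ℝⁿ → Matₙ(ℝ) be measurable, 1-periodic, symmetric, and satisfy C₁ I ≤ A(y) ≤ C₂ I with 0 < C₁ ≤ C₂. For p ∈ ℝⁿ define ⟨Ā p, p⟩ := inf over v ∈ H¹(𝕋ⁿ) of ∫_{𝕋ⁿ} ⟨A(y)(∇v(y)+p), ∇v(y)+p⟩ dy. Then p ↦ ⟨Ā p, p⟩ is a quadratic form, i.e., it arises from a symmetric matrix Ā, and the matrix Ā satisfies C₁ I ≤ Ā ≤ C₂ I. -/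
open MeasureTheory Matrix

/-- The gradient of a scalar function on `ℝⁿ` as a vector of partial derivatives. -/
noncomputable def pgrad {n : ℕ} (v : (Fin n → ℝ) → ℝ) (y : Fin n → ℝ) : Fin n → ℝ :=
  fun i => fderiv ℝ v y (Pi.single i 1)

namespace Stmt4

open Set

/-! ### Pointwise algebra -/

lemma symm_swap {n : ℕ} (M : Matrix (Fin n) (Fin n) ℝ) (h : M.IsSymm) (u w : Fin n → ℝ) :
    M.mulVec u ⬝ᵥ w = M.mulVec w ⬝ᵥ u := by
  rw [dotProduct_comm, Matrix.dotProduct_mulVec, ← Matrix.mulVec_transpose, h.eq]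

lemma quad_par {n : ℕ} (M : Matrix (Fin n) (Fin n) ℝ) (h : M.IsSymm) (a b : Fin n → ℝ) :
    M.mulVec (a + b) ⬝ᵥ (a + b) + M.mulVec (a - b) ⬝ᵥ (a - b)
      = 2 * (M.mulVec a ⬝ᵥ a) + 2 * (M.mulVec b ⬝ᵥ b) := by
  simp only [Matrix.mulVec_add, Matrix.mulVec_sub, add_dotProduct,
    sub_dotProduct, dotProduct_add, dotProduct_sub]
  linarith [symm_swap M h a b]

lemma quad_expand {n : ℕ} (M : Matrix (Fin n) (Fin n) ℝ) (h : M.IsSymm) (g p : Fin n → ℝ) :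
    M.mulVec (g + p) ⬝ᵥ (g + p)
      = M.mulVec g ⬝ᵥ g + 2 * (M.mulVec p ⬝ᵥ g) + M.mulVec p ⬝ᵥ p := by
  simp only [Matrix.mulVec_add, add_dotProduct, dotProduct_add]
  linarith [symm_swap M h g p]

lemma dp_self_nonneg {n : ℕ} (v : Fin n → ℝ) : 0 ≤ v ⬝ᵥ v :=
  Finset.sum_nonneg fun _ _ => mul_self_nonneg _

lemma dp_expand_add {n : ℕ} (u w : Fin n → ℝ) :
    (u + w) ⬝ᵥ (u + w) = u ⬝ᵥ u + 2 * (u ⬝ᵥ w) + w ⬝ᵥ w := by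
  simp only [add_dotProduct, dotProduct_add]
  rw [dotProduct_comm w u]; ring

lemma dp_expand_sub {n : ℕ} (u w : Fin n → ℝ) :
    (u - w) ⬝ᵥ (u - w) = u ⬝ᵥ u - 2 * (u ⬝ᵥ w) + w ⬝ᵥ w := by
  simp only [sub_dotProduct, dotProduct_sub]
  rw [dotProduct_comm w u]; ring

/-! ### pgrad lemmas -/

lemma pgrad_cont {n : ℕ} {v : (Fin n → ℝ) → ℝ} (hv : ContDiff ℝ 1 v) : Continuous (pgrad v) := by
  have h : Continuous fun y => fderiv ℝ v y := (hv.fderiv_right (m := 0) le_rfl).continuous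
  exact continuous_pi fun i => (ContinuousLinearMap.apply ℝ ℝ (Pi.single i 1)).continuous.comp h

lemma pgrad_zero {n : ℕ} : pgrad (fun _ : Fin n → ℝ => (0:ℝ)) = fun _ => (0 : Fin n → ℝ) := by
  funext y i; simp [pgrad]

lemma pgrad_add {n : ℕ} {v w : (Fin n → ℝ) → ℝ} (hv : ContDiff ℝ 1 v) (hw : ContDiff ℝ 1 w)
    (y : Fin n → ℝ) :
    pgrad (fun x => v x + w x) y = pgrad v y + pgrad w y := by
  funext i
  have := fderiv_fun_add (𝕜 := ℝ) (hv.differentiable one_ne_zero).differentiableAt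
    (hw.differentiable one_ne_zero).differentiableAt (x := y)
  simp [pgrad, this]

lemma pgrad_sub {n : ℕ} {v w : (Fin n → ℝ) → ℝ} (hv : ContDiff ℝ 1 v) (hw : ContDiff ℝ 1 w)
    (y : Fin n → ℝ) :
    pgrad (fun x => v x - w x) y = pgrad v y - pgrad w y := by
  funext i
  have := fderiv_fun_sub (𝕜 := ℝ) (hv.differentiable one_ne_zero).differentiableAt
    (hw.differentiable one_ne_zero).differentiableAt (x := y)
  simp [pgrad, this]

lemma pgrad_smul {n : ℕ} {v : (Fin n → ℝ) → ℝ} (hv : ContDiff ℝ 1 v) (c : ℝ) (y : Fin n → ℝ) :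
    pgrad (fun x => c * v x) y = c • pgrad v y := by
  funext i
  have := fderiv_const_mul (𝕜 := ℝ) (hv.differentiable one_ne_zero).differentiableAt c (x := y)
  simp [pgrad, this]

end Stmt4

namespace Stmt4
open Set

/-! ### Measurability / integrability -/

lemma meas_q {n : ℕ} {A : (Fin n → ℝ) → Matrix (Fin n) (Fin n) ℝ}
    (hmeas : ∀ i j, Measurable (fun y => A y i j))
    {g h : (Fin n → ℝ) → (Fin n → ℝ)} (hg : Continuous g) (hh : Continuous h) :
    Measurable fun y => (A y).mulVec (g y) ⬝ᵥ h y := by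
  simp only [Matrix.mulVec, dotProduct]
  refine Finset.measurable_sum _ fun i _ =>
    Measurable.mul ?_ ((continuous_apply i).comp hh).measurable
  exact Finset.measurable_sum _ fun j _ =>
    (hmeas i j).mul ((continuous_apply j).comp hg).measurable

lemma abs_bound {n : ℕ} {A : (Fin n → ℝ) → Matrix (Fin n) (Fin n) ℝ} {C₁ C₂ : ℝ}
    (hsymm : ∀ y, (A y).IsSymm) (hC₁ : 0 < C₁) (hC₂ : 0 ≤ C₂)
    (hlb : ∀ y p, C₁ * (p ⬝ᵥ p) ≤ (A y).mulVec p ⬝ᵥ p)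
    (hub : ∀ y p, (A y).mulVec p ⬝ᵥ p ≤ C₂ * (p ⬝ᵥ p))
    (y : Fin n → ℝ) (u w : Fin n → ℝ) :
    |(A y).mulVec u ⬝ᵥ w| ≤ C₂ * (u ⬝ᵥ u + w ⬝ᵥ w) := by
  have e : (A y).mulVec (w + u) ⬝ᵥ (w + u)
      = (A y).mulVec w ⬝ᵥ w + 2 * ((A y).mulVec u ⬝ᵥ w) + (A y).mulVec u ⬝ᵥ u :=
    quad_expand (A y) (hsymm y) w u
  have nn : ∀ z : Fin n → ℝ, 0 ≤ (A y).mulVec z ⬝ᵥ z := fun z =>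
    le_trans (mul_nonneg hC₁.le (dp_self_nonneg z)) (hlb y z)
  have h1 := hub y (w + u)
  have h2 := hub y u
  have h3 := hub y w
  have h4 := nn (w + u)
  have h5 := nn u
  have h6 := nn w
  have d1 := dp_expand_add w u
  have d2 := dp_expand_sub w u
  have d3 := dp_self_nonneg (w - u)
  have d4 := dp_self_nonneg (w + u)
  rw [abs_le]; constructor <;> nlinarith [dotProduct_comm u w]

lemma integrableOn_q {n : ℕ} {A : (Fin n → ℝ) → Matrix (Fin n) (Fin n) ℝ} {C₁ C₂ : ℝ}
    (hmeas : ∀ i j, Measurable (fun y => A y i j))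
    (hsymm : ∀ y, (A y).IsSymm) (hC₁ : 0 < C₁) (hC₂ : 0 ≤ C₂)
    (hlb : ∀ y p, C₁ * (p ⬝ᵥ p) ≤ (A y).mulVec p ⬝ᵥ p)
    (hub : ∀ y p, (A y).mulVec p ⬝ᵥ p ≤ C₂ * (p ⬝ᵥ p))
    {g h : (Fin n → ℝ) → (Fin n → ℝ)} (hg : Continuous g) (hh : Continuous h) :
    IntegrableOn (fun y => (A y).mulVec (g y) ⬝ᵥ h y) (Set.Icc (0 : Fin n → ℝ) 1) := by
  obtain ⟨Cg, hCg⟩ := (isCompact_Icc (a := (0 : Fin n → ℝ)) (b := 1)).exists_bound_of_continuousOn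
    hg.continuousOn
  obtain ⟨Ch, hCh⟩ := (isCompact_Icc (a := (0 : Fin n → ℝ)) (b := 1)).exists_bound_of_continuousOn
    hh.continuousOn
  have hdp : ∀ (u : Fin n → ℝ) (C : ℝ), ‖u‖ ≤ C → u ⬝ᵥ u ≤ n * C ^ 2 := by
    intro u C hu
    have hC0 : 0 ≤ C := (norm_nonneg u).trans hu
    have key : ∀ i, u i * u i ≤ C ^ 2 := by
      intro i
      have h1 : |u i| ≤ C := by
        calc |u i| = ‖u i‖ := (Real.norm_eq_abs _).symm
        _ ≤ ‖u‖ := norm_le_pi_norm u i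
        _ ≤ C := hu
      nlinarith [abs_nonneg (u i), le_abs_self (u i), neg_abs_le (u i)]
    calc u ⬝ᵥ u = ∑ i, u i * u i := rfl
    _ ≤ ∑ _i : Fin n, C ^ 2 := Finset.sum_le_sum fun i _ => key i
    _ = n * C ^ 2 := by simp [mul_comm]
  refine Measure.integrableOn_of_bounded (M := C₂ * (n * Cg ^ 2 + n * Ch ^ 2))
    (isCompact_Icc.measure_lt_top).ne
    ((meas_q hmeas hg hh).aestronglyMeasurable) ?_
  filter_upwards [ae_restrict_mem measurableSet_Icc] with y hy
  rw [Real.norm_eq_abs]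
  calc |(A y).mulVec (g y) ⬝ᵥ h y| ≤ C₂ * (g y ⬝ᵥ g y + h y ⬝ᵥ h y) :=
      abs_bound hsymm hC₁ hC₂ hlb hub y _ _
  _ ≤ C₂ * (n * Cg ^ 2 + n * Ch ^ 2) := by
      have h1 := hdp (g y) Cg (hCg y hy)
      have h2 := hdp (h y) Ch (hCh y hy)
      have h3 := dp_self_nonneg (g y)
      have h4 := dp_self_nonneg (h y)
      nlinarith

/-! ### Zero average of gradients of periodic functions -/

lemma insertNth_one_eq {m : ℕ} (i : Fin (m+1)) (x : Fin m → ℝ) :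
    (Fin.insertNth i (1:ℝ) x : Fin (m+1) → ℝ)
      = (Fin.insertNth i (0:ℝ) x : Fin (m+1) → ℝ) + Pi.single i 1 := by
  funext k
  refine Fin.succAboveCases i ?_ ?_ k
  · simp
  · intro j
    have hne := Fin.succAbove_ne i j
    simp [Fin.insertNth_apply_succAbove, Pi.single_apply, hne.symm]

lemma integral_pgrad_zero_succ {m : ℕ} {v : (Fin (m+1) → ℝ) → ℝ} (hv : ContDiff ℝ 1 v)
    (hper : ∀ y (i : Fin (m+1)), v (y + Pi.single i 1) = v y) (i : Fin (m+1)) :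
    ∫ y in Set.Icc (0 : Fin (m+1) → ℝ) 1, pgrad v y i = 0 := by
  classical
  set f : Fin (m+1) → (Fin (m+1) → ℝ) → ℝ := fun j => if j = i then v else 0 with hf
  set f' : Fin (m+1) → (Fin (m+1) → ℝ) → (Fin (m+1) → ℝ) →L[ℝ] ℝ :=
    fun j x => if j = i then fderiv ℝ v x else 0 with hf'
  have hdiv : ∀ x, (∑ j, f' j x (Pi.single j 1)) = pgrad v x i := by
    intro x
    rw [Finset.sum_eq_single i]
    · simp [f', pgrad]
    · intro j _ hj; simp [f', hj]
    · simp
  have key := integral_divergence_of_hasFDerivAt_off_countable'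
    (0 : Fin (m+1) → ℝ) 1 zero_le_one f f' ∅ Set.countable_empty
    (fun j => by
      by_cases hj : j = i
      · simpa [f, hj] using (hv.continuous.continuousOn)
      · simp only [f, if_neg hj]; exact continuousOn_const)
    (fun x _ j => by
      by_cases hj : j = i
      · subst hj; simpa [f, f'] using (hv.differentiable one_ne_zero x).hasFDerivAt
      · simp only [f, f', if_neg hj]; exact hasFDerivAt_const (0:ℝ) x)
    (by
      apply (ContinuousOn.integrableOn_compact isCompact_Icc)
      have : Continuous fun x => pgrad v x i :=
        (continuous_apply i).comp (pgrad_cont hv)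
      exact (this.congr fun x => (hdiv x).symm).continuousOn)
  calc ∫ y in Set.Icc (0 : Fin (m+1) → ℝ) 1, pgrad v y i
      = ∫ x in Set.Icc (0 : Fin (m+1) → ℝ) 1, ∑ j, f' j x (Pi.single j 1) := by
        refine setIntegral_congr_fun measurableSet_Icc fun x _ => (hdiv x).symm
  _ = _ := key
  _ = 0 := by
      refine Finset.sum_eq_zero fun j _ => ?_
      by_cases hj : j = i
      · subst hj
        rw [sub_eq_zero]
        refine setIntegral_congr_fun measurableSet_Icc fun x _ => ?_
        have h1 : ((1 : Fin (m+1) → ℝ) j) = (1:ℝ) := rfl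
        have h0 : ((0 : Fin (m+1) → ℝ) j) = (0:ℝ) := rfl
        simp only [f, if_pos rfl, h1, h0, insertNth_one_eq, hper]
      · simp [f, hj]

lemma integral_pgrad_zero {n : ℕ} {v : (Fin n → ℝ) → ℝ} (hv : ContDiff ℝ 1 v)
    (hper : ∀ y (i : Fin n), v (y + Pi.single i 1) = v y) (i : Fin n) :
    ∫ y in Set.Icc (0 : Fin n → ℝ) 1, pgrad v y i = 0 := by
  cases n with
  | zero => exact i.elim0
  | succ m => exact integral_pgrad_zero_succ hv hper i

end Stmt4

namespace Stmt4
open Set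

structure Pack (n : ℕ) where
  A : (Fin n → ℝ) → Matrix (Fin n) (Fin n) ℝ
  C₁ : ℝ
  C₂ : ℝ
  hmeas : ∀ i j, Measurable fun y => A y i j
  hsymm : ∀ y, (A y).IsSymm
  hC₁ : 0 < C₁
  hC : C₁ ≤ C₂
  hlb : ∀ y p, C₁ * (p ⬝ᵥ p) ≤ (A y).mulVec p ⬝ᵥ p
  hub : ∀ y p, (A y).mulVec p ⬝ᵥ p ≤ C₂ * (p ⬝ᵥ p)

variable {n : ℕ}

lemma Pack.hC₂ (P : Pack n) : 0 ≤ P.C₂ := le_trans P.hC₁.le P.hC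

/-- Admissible test functions. -/
def Adm (v : (Fin n → ℝ) → ℝ) : Prop :=
  ContDiff ℝ 1 v ∧ ∀ y (i : Fin n), v (y + Pi.single i 1) = v y

noncomputable def Fv (P : Pack n) (v : (Fin n → ℝ) → ℝ) (p : Fin n → ℝ) : ℝ :=
  ∫ y in Set.Icc (0 : Fin n → ℝ) 1, (P.A y).mulVec (pgrad v y + p) ⬝ᵥ (pgrad v y + p)

def Sset (P : Pack n) (p : Fin n → ℝ) : Set ℝ :=
  {r : ℝ | ∃ v : (Fin n → ℝ) → ℝ, ContDiff ℝ 1 v ∧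
    (∀ y (i : Fin n), v (y + Pi.single i 1) = v y) ∧
    r = ∫ y in Set.Icc (0 : Fin n → ℝ) 1,
      (P.A y).mulVec (pgrad v y + p) ⬝ᵥ (pgrad v y + p)}

noncomputable def Qf (P : Pack n) (p : Fin n → ℝ) : ℝ := sInf (Sset P p)

lemma mem_Sset {P : Pack n} {v : (Fin n → ℝ) → ℝ} (hv : Adm v) (p : Fin n → ℝ) :
    Fv P v p ∈ Sset P p := ⟨v, hv.1, hv.2, rfl⟩

lemma Adm.zero : Adm (fun _ : Fin n → ℝ => (0:ℝ)) :=
  ⟨contDiff_const, fun _ _ => rfl⟩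

lemma Sset_nonempty (P : Pack n) (p : Fin n → ℝ) : (Sset P p).Nonempty :=
  ⟨_, mem_Sset Adm.zero p⟩

lemma vol_box : volume.real (Set.Icc (0 : Fin n → ℝ) 1) = 1 := by
  rw [measureReal_def, Real.volume_Icc_pi_toReal zero_le_one]
  simp

lemma integrableOn_qP (P : Pack n) {g h : (Fin n → ℝ) → (Fin n → ℝ)}
    (hg : Continuous g) (hh : Continuous h) :
    IntegrableOn (fun y => (P.A y).mulVec (g y) ⬝ᵥ h y) (Set.Icc (0 : Fin n → ℝ) 1) :=
  integrableOn_q P.hmeas P.hsymm P.hC₁ P.hC₂ P.hlb P.hub hg hh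

lemma cont_field {v : (Fin n → ℝ) → ℝ} (hv : ContDiff ℝ 1 v) (p : Fin n → ℝ) :
    Continuous fun y => pgrad v y + p :=
  (pgrad_cont hv).add continuous_const

lemma integrableOn_const_box (c : ℝ) :
    IntegrableOn (fun _ : Fin n → ℝ => c) (Set.Icc (0 : Fin n → ℝ) 1) :=
  integrableOn_const isCompact_Icc.measure_lt_top.ne

lemma cont_dp {g h : (Fin n → ℝ) → (Fin n → ℝ)} (hg : Continuous g) (hh : Continuous h) :
    Continuous fun y => g y ⬝ᵥ h y := by
  simp only [dotProduct]
  exact continuous_finset_sum _ fun i _ =>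
    ((continuous_apply i).comp hg).mul ((continuous_apply i).comp hh)

lemma sq_int {u : (Fin n → ℝ) → ℝ} (hu : Continuous u) :
    (∫ y in Set.Icc (0 : Fin n → ℝ) 1, u y) ^ 2
      ≤ ∫ y in Set.Icc (0 : Fin n → ℝ) 1, (u y) ^ 2 := by
  set m := ∫ y in Set.Icc (0 : Fin n → ℝ) 1, u y with hm
  have hu2 : IntegrableOn (fun y => (u y) ^ 2) (Set.Icc (0 : Fin n → ℝ) 1) :=
    ((hu.pow 2).continuousOn).integrableOn_compact isCompact_Icc
  have hu1 : IntegrableOn u (Set.Icc (0 : Fin n → ℝ) 1) :=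
    hu.continuousOn.integrableOn_compact isCompact_Icc
  have h0 : 0 ≤ ∫ y in Set.Icc (0 : Fin n → ℝ) 1, (u y - m) ^ 2 :=
    setIntegral_nonneg measurableSet_Icc fun y _ => sq_nonneg _
  have e0 : (fun y => (u y - m) ^ 2)
      = fun y => ((u y) ^ 2 - (2 * m) * u y) + m ^ 2 := funext fun y => by ring
  rw [e0] at h0
  have i1 : IntegrableOn (fun y => (u y) ^ 2 - (2 * m) * u y) (Set.Icc (0 : Fin n → ℝ) 1) :=
    hu2.sub (hu1.const_mul _)
  have i2 : IntegrableOn (fun y => (2 * m) * u y) (Set.Icc (0 : Fin n → ℝ) 1) :=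
    hu1.const_mul _
  rw [integral_add i1 (integrableOn_const_box _), integral_sub hu2 i2, integral_const_mul,
    setIntegral_const, vol_box, smul_eq_mul, one_mul, ← hm] at h0
  nlinarith [h0]

lemma integral_field (P : Pack n) {v : (Fin n → ℝ) → ℝ} (hv : Adm v) (p : Fin n → ℝ)
    (i : Fin n) :
    ∫ y in Set.Icc (0 : Fin n → ℝ) 1, (pgrad v y + p) i = p i := by
  have hpg : IntegrableOn (fun y => pgrad v y i) (Set.Icc (0 : Fin n → ℝ) 1) :=
    (((continuous_apply i).comp (pgrad_cont hv.1)).continuousOn).integrableOn_compact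
      isCompact_Icc
  have : (fun y => (pgrad v y + p) i) = fun y => pgrad v y i + p i := rfl
  rw [this, integral_add hpg (integrableOn_const_box _), integral_pgrad_zero hv.1 hv.2 i,
    setIntegral_const, vol_box, smul_eq_mul, one_mul, zero_add]

/-- Lower bound for every member of `Sset`. -/
lemma S_lower (P : Pack n) (p : Fin n → ℝ) {r : ℝ} (hr : r ∈ Sset P p) :
    P.C₁ * (p ⬝ᵥ p) ≤ r := by
  obtain ⟨v, hv1, hv2, rfl⟩ := hr
  have hv : Adm v := ⟨hv1, hv2⟩
  set g : (Fin n → ℝ) → (Fin n → ℝ) := fun y => pgrad v y + p with hg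
  have hgc : Continuous g := cont_field hv1 p
  have hgcomp : ∀ i, Continuous fun y => g y i := fun i => (continuous_apply i).comp hgc
  have step1 : P.C₁ * (∫ y in Set.Icc (0 : Fin n → ℝ) 1, g y ⬝ᵥ g y)
      ≤ ∫ y in Set.Icc (0 : Fin n → ℝ) 1, (P.A y).mulVec (g y) ⬝ᵥ g y := by
    rw [← integral_const_mul]
    exact setIntegral_mono_on
      ((((continuous_const.mul (cont_dp hgc hgc))).continuousOn).integrableOn_compact
        isCompact_Icc)
      (integrableOn_qP P hgc hgc) measurableSet_Icc fun y _ => P.hlb y (g y)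
  have step2 : (∫ y in Set.Icc (0 : Fin n → ℝ) 1, g y ⬝ᵥ g y)
      = ∑ i, ∫ y in Set.Icc (0 : Fin n → ℝ) 1, (g y i) ^ 2 := by
    rw [← integral_finset_sum]
    · refine setIntegral_congr_fun measurableSet_Icc fun y _ => ?_
      simp [dotProduct, sq]
    · exact fun i _ => (((hgcomp i).pow 2).continuousOn).integrableOn_compact isCompact_Icc
  have step3 : ∀ i, (p i) ^ 2 ≤ ∫ y in Set.Icc (0 : Fin n → ℝ) 1, (g y i) ^ 2 := by
    intro i
    have := sq_int (hgcomp i)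
    rwa [integral_field P hv p i] at this
  have step4 : p ⬝ᵥ p ≤ ∫ y in Set.Icc (0 : Fin n → ℝ) 1, g y ⬝ᵥ g y := by
    rw [step2]
    calc p ⬝ᵥ p = ∑ i, (p i) ^ 2 := by simp [dotProduct, sq]
    _ ≤ _ := Finset.sum_le_sum fun i _ => step3 i
  calc P.C₁ * (p ⬝ᵥ p) ≤ P.C₁ * ∫ y in Set.Icc (0 : Fin n → ℝ) 1, g y ⬝ᵥ g y :=
      mul_le_mul_of_nonneg_left step4 P.hC₁.le
  _ ≤ _ := step1

lemma bddBelow_Sset (P : Pack n) (p : Fin n → ℝ) : BddBelow (Sset P p) :=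
  ⟨P.C₁ * (p ⬝ᵥ p), fun r hr => S_lower P p hr⟩

lemma Qf_lb (P : Pack n) (p : Fin n → ℝ) : P.C₁ * (p ⬝ᵥ p) ≤ Qf P p :=
  le_csInf (Sset_nonempty P p) fun r hr => S_lower P p hr

lemma Qf_le (P : Pack n) {v : (Fin n → ℝ) → ℝ} (hv : Adm v) (p : Fin n → ℝ) :
    Qf P p ≤ Fv P v p :=
  csInf_le (bddBelow_Sset P p) (mem_Sset hv p)

lemma Qf_ub (P : Pack n) (p : Fin n → ℝ) : Qf P p ≤ P.C₂ * (p ⬝ᵥ p) := by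
  refine le_trans (Qf_le P Adm.zero p) ?_
  have e : Fv P (fun _ => (0:ℝ)) p
      = ∫ y in Set.Icc (0 : Fin n → ℝ) 1, (P.A y).mulVec p ⬝ᵥ p := by
    unfold Fv
    refine setIntegral_congr_fun measurableSet_Icc fun y _ => ?_
    rw [pgrad_zero]; simp
  rw [e]
  calc (∫ y in Set.Icc (0 : Fin n → ℝ) 1, (P.A y).mulVec p ⬝ᵥ p)
      ≤ ∫ _y in Set.Icc (0 : Fin n → ℝ) 1, P.C₂ * (p ⬝ᵥ p) :=
      setIntegral_mono_on (integrableOn_qP P continuous_const continuous_const)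
        (integrableOn_const_box _) measurableSet_Icc fun y _ => P.hub y p
  _ = P.C₂ * (p ⬝ᵥ p) := by rw [setIntegral_const, vol_box, smul_eq_mul, one_mul]

lemma Adm.add {v w : (Fin n → ℝ) → ℝ} (hv : Adm v) (hw : Adm w) :
    Adm (fun x => v x + w x) :=
  ⟨hv.1.add hw.1, fun y i => by simp only [hv.2 y i, hw.2 y i]⟩

lemma Adm.sub {v w : (Fin n → ℝ) → ℝ} (hv : Adm v) (hw : Adm w) :
    Adm (fun x => v x - w x) :=
  ⟨hv.1.sub hw.1, fun y i => by simp only [hv.2 y i, hw.2 y i]⟩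

lemma Adm.half_add {v w : (Fin n → ℝ) → ℝ} (hv : Adm v) (hw : Adm w) :
    Adm (fun x => (1/2 : ℝ) * (v x + w x)) :=
  ⟨contDiff_const.mul (hv.1.add hw.1), fun y i => by simp only [hv.2 y i, hw.2 y i]⟩

lemma Adm.half_sub {v w : (Fin n → ℝ) → ℝ} (hv : Adm v) (hw : Adm w) :
    Adm (fun x => (1/2 : ℝ) * (v x - w x)) :=
  ⟨contDiff_const.mul (hv.1.sub hw.1), fun y i => by simp only [hv.2 y i, hw.2 y i]⟩

/-- The key quadratic identity for `Fv`. -/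
lemma Fv_par (P : Pack n) {v w : (Fin n → ℝ) → ℝ} (hv : Adm v) (hw : Adm w)
    (p q : Fin n → ℝ) :
    Fv P (fun x => v x + w x) (p + q) + Fv P (fun x => v x - w x) (p - q)
      = 2 * Fv P v p + 2 * Fv P w q := by
  have hac : Continuous fun y => pgrad v y + p := cont_field hv.1 p
  have hbc : Continuous fun y => pgrad w y + q := cont_field hw.1 q
  have hf1 : Fv P (fun x => v x + w x) (p + q)
      = ∫ y in Set.Icc (0 : Fin n → ℝ) 1,
          (P.A y).mulVec ((pgrad v y + p) + (pgrad w y + q))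
            ⬝ᵥ ((pgrad v y + p) + (pgrad w y + q)) := by
    unfold Fv
    refine setIntegral_congr_fun measurableSet_Icc fun y _ => ?_
    rw [pgrad_add hv.1 hw.1]
    have e : (pgrad v y + pgrad w y) + (p + q) = (pgrad v y + p) + (pgrad w y + q) := by abel
    rw [e]
  have hf2 : Fv P (fun x => v x - w x) (p - q)
      = ∫ y in Set.Icc (0 : Fin n → ℝ) 1,
          (P.A y).mulVec ((pgrad v y + p) - (pgrad w y + q))
            ⬝ᵥ ((pgrad v y + p) - (pgrad w y + q)) := by
    unfold Fv
    refine setIntegral_congr_fun measurableSet_Icc fun y _ => ?_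
    rw [pgrad_sub hv.1 hw.1]
    have e : (pgrad v y - pgrad w y) + (p - q) = (pgrad v y + p) - (pgrad w y + q) := by abel
    rw [e]
  have i1 : IntegrableOn (fun y => (P.A y).mulVec ((pgrad v y + p) + (pgrad w y + q))
      ⬝ᵥ ((pgrad v y + p) + (pgrad w y + q))) (Set.Icc (0 : Fin n → ℝ) 1) :=
    integrableOn_qP P (hac.add hbc) (hac.add hbc)
  have i2 : IntegrableOn (fun y => (P.A y).mulVec ((pgrad v y + p) - (pgrad w y + q))
      ⬝ᵥ ((pgrad v y + p) - (pgrad w y + q))) (Set.Icc (0 : Fin n → ℝ) 1) :=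
    integrableOn_qP P (hac.sub hbc) (hac.sub hbc)
  have ia := integrableOn_qP P hac hac
  have ib := integrableOn_qP P hbc hbc
  rw [hf1, hf2, ← integral_add i1 i2]
  have key : ∀ y, (P.A y).mulVec ((pgrad v y + p) + (pgrad w y + q))
        ⬝ᵥ ((pgrad v y + p) + (pgrad w y + q))
      + (P.A y).mulVec ((pgrad v y + p) - (pgrad w y + q))
        ⬝ᵥ ((pgrad v y + p) - (pgrad w y + q))
      = 2 * ((P.A y).mulVec (pgrad v y + p) ⬝ᵥ (pgrad v y + p))
      + 2 * ((P.A y).mulVec (pgrad w y + q) ⬝ᵥ (pgrad w y + q)) := fun y =>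
    quad_par (P.A y) (P.hsymm y) _ _
  rw [setIntegral_congr_fun measurableSet_Icc fun y _ => key y,
    integral_add (ia.const_mul 2) (ib.const_mul 2), integral_const_mul, integral_const_mul]
  rfl

/-- Parallelogram law for `Qf`. -/
lemma Qf_par (P : Pack n) (p q : Fin n → ℝ) :
    Qf P (p + q) + Qf P (p - q) = 2 * Qf P p + 2 * Qf P q := by
  have dir1 : Qf P (p + q) + Qf P (p - q) ≤ 2 * Qf P p + 2 * Qf P q := by
    refine le_of_forall_pos_le_add fun ε hε => ?_
    obtain ⟨r₁, hr₁S, hr₁lt⟩ := Real.lt_sInf_add_pos (Sset_nonempty P p) (by positivity :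
      (0:ℝ) < ε/4)
    obtain ⟨v, hv1, hv2, hr₁e⟩ := hr₁S
    obtain ⟨r₂, hr₂S, hr₂lt⟩ := Real.lt_sInf_add_pos (Sset_nonempty P q) (by positivity :
      (0:ℝ) < ε/4)
    obtain ⟨w, hw1, hw2, hr₂e⟩ := hr₂S
    have hv : Adm v := ⟨hv1, hv2⟩
    have hw : Adm w := ⟨hw1, hw2⟩
    subst hr₁e hr₂e
    have h1 : Fv P v p < Qf P p + ε/4 := hr₁lt
    have h2 : Fv P w q < Qf P q + ε/4 := hr₂lt
    have h3 : Qf P (p + q) ≤ Fv P (fun x => v x + w x) (p + q) := Qf_le P (hv.add hw) _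
    have h4 : Qf P (p - q) ≤ Fv P (fun x => v x - w x) (p - q) := Qf_le P (hv.sub hw) _
    have h5 := Fv_par P hv hw p q
    linarith
  have dir2 : 2 * Qf P p + 2 * Qf P q ≤ Qf P (p + q) + Qf P (p - q) := by
    refine le_of_forall_pos_le_add fun ε hε => ?_
    obtain ⟨r₁, hr₁S, hr₁lt⟩ := Real.lt_sInf_add_pos (Sset_nonempty P (p + q))
      (by positivity : (0:ℝ) < ε/2)
    obtain ⟨a, ha1, ha2, hr₁e⟩ := hr₁S
    obtain ⟨r₂, hr₂S, hr₂lt⟩ := Real.lt_sInf_add_pos (Sset_nonempty P (p - q))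
      (by positivity : (0:ℝ) < ε/2)
    obtain ⟨b, hb1, hb2, hr₂e⟩ := hr₂S
    have ha : Adm a := ⟨ha1, ha2⟩
    have hb : Adm b := ⟨hb1, hb2⟩
    subst hr₁e hr₂e
    have h1 : Fv P a (p + q) < Qf P (p + q) + ε/2 := hr₁lt
    have h2 : Fv P b (p - q) < Qf P (p - q) + ε/2 := hr₂lt
    set v : (Fin n → ℝ) → ℝ := fun x => (1/2 : ℝ) * (a x + b x) with hvdef
    set w : (Fin n → ℝ) → ℝ := fun x => (1/2 : ℝ) * (a x - b x) with hwdef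
    have hv : Adm v := ha.half_add hb
    have hw : Adm w := ha.half_sub hb
    have hvw : (fun x => v x + w x) = a := funext fun x => by simp [hvdef, hwdef]; ring
    have hvw' : (fun x => v x - w x) = b := funext fun x => by simp [hvdef, hwdef]; ring
    have h5 := Fv_par P hv hw p q
    rw [hvw, hvw'] at h5
    have h3 : Qf P p ≤ Fv P v p := Qf_le P hv p
    have h4 : Qf P q ≤ Fv P w q := Qf_le P hw q
    linarith
  linarith


/-! ### Continuity of `Qf` -/

lemma entry_int (P : Pack n) (i j : Fin n) :
    IntegrableOn (fun y => P.A y i j) (Set.Icc (0 : Fin n → ℝ) 1) := by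
  have he : ∀ y, P.A y i j
      = (P.A y).mulVec (Pi.single j 1) ⬝ᵥ (Pi.single i 1 : Fin n → ℝ) := by
    intro y
    rw [Matrix.mulVec_single, dotProduct_single]
    simp
  have h1 : (Pi.single j (1:ℝ) : Fin n → ℝ) ⬝ᵥ Pi.single j 1 = 1 := by
    rw [single_dotProduct]; simp
  have h2 : (Pi.single i (1:ℝ) : Fin n → ℝ) ⬝ᵥ Pi.single i 1 = 1 := by
    rw [single_dotProduct]; simp
  refine Measure.integrableOn_of_bounded (M := P.C₂ * 2)
    (isCompact_Icc.measure_lt_top).ne ((P.hmeas i j).aestronglyMeasurable) ?_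
  filter_upwards with y
  rw [Real.norm_eq_abs, he y]
  have := abs_bound P.hsymm P.hC₁ P.hC₂ P.hlb P.hub y (Pi.single j 1)
    (Pi.single i (1:ℝ) : Fin n → ℝ)
  rw [h1, h2] at this
  linarith

noncomputable def Kf (P : Pack n) (p : Fin n → ℝ) : ℝ :=
  ∫ y in Set.Icc (0 : Fin n → ℝ) 1, (P.A y).mulVec p ⬝ᵥ p

lemma Kf_eq (P : Pack n) (p : Fin n → ℝ) :
    Kf P p = ∑ i, ∑ j, (∫ y in Set.Icc (0 : Fin n → ℝ) 1, P.A y i j) * p j * p i := by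
  unfold Kf
  have e : ∀ y, (P.A y).mulVec p ⬝ᵥ p = ∑ i, ∑ j, P.A y i j * p j * p i := by
    intro y
    simp [Matrix.mulVec, dotProduct, Finset.sum_mul]
  have iInt : ∀ i j : Fin n, IntegrableOn (fun y => P.A y i j * p j * p i)
      (Set.Icc (0 : Fin n → ℝ) 1) := fun i j => ((entry_int P i j).mul_const _).mul_const _
  rw [setIntegral_congr_fun measurableSet_Icc fun y _ => e y,
    integral_finset_sum _ (fun i _ => integrable_finset_sum _ (fun j _ => iInt i j))]
  refine Finset.sum_congr rfl fun i _ => ?_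
  rw [integral_finset_sum _ (fun j _ => iInt i j)]
  refine Finset.sum_congr rfl fun j _ => ?_
  rw [integral_mul_const, integral_mul_const]

lemma Kf_cont (P : Pack n) : Continuous (Kf P) := by
  have e : Kf P = fun p => ∑ i, ∑ j,
      (∫ y in Set.Icc (0 : Fin n → ℝ) 1, P.A y i j) * p j * p i := funext (Kf_eq P)
  rw [e]
  exact continuous_finset_sum _ fun i _ => continuous_finset_sum _ fun j _ =>
    (continuous_const.mul (continuous_apply j)).mul (continuous_apply i)

noncomputable def Gv (P : Pack n) (v : (Fin n → ℝ) → ℝ) (p : Fin n → ℝ) : ℝ :=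
  ∫ y in Set.Icc (0 : Fin n → ℝ) 1,
    ((P.A y).mulVec (pgrad v y) ⬝ᵥ pgrad v y + 2 * ((P.A y).mulVec p ⬝ᵥ pgrad v y))

def Tset (P : Pack n) (p : Fin n → ℝ) : Set ℝ :=
  {r : ℝ | ∃ v, Adm v ∧ r = Gv P v p}

noncomputable def Rf (P : Pack n) (p : Fin n → ℝ) : ℝ := sInf (Tset P p)

lemma Gv_integrable1 (P : Pack n) {v : (Fin n → ℝ) → ℝ} (hv : ContDiff ℝ 1 v) :
    IntegrableOn (fun y => (P.A y).mulVec (pgrad v y) ⬝ᵥ pgrad v y)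
      (Set.Icc (0 : Fin n → ℝ) 1) :=
  integrableOn_qP P (pgrad_cont hv) (pgrad_cont hv)

lemma Gv_integrable2 (P : Pack n) {v : (Fin n → ℝ) → ℝ} (hv : ContDiff ℝ 1 v)
    (p : Fin n → ℝ) :
    IntegrableOn (fun y => 2 * ((P.A y).mulVec p ⬝ᵥ pgrad v y))
      (Set.Icc (0 : Fin n → ℝ) 1) :=
  (integrableOn_qP P continuous_const (pgrad_cont hv)).const_mul 2

lemma Fv_decomp (P : Pack n) {v : (Fin n → ℝ) → ℝ} (hv : Adm v) (p : Fin n → ℝ) :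
    Fv P v p = Gv P v p + Kf P p := by
  unfold Fv Gv Kf
  have e : ∀ y, (P.A y).mulVec (pgrad v y + p) ⬝ᵥ (pgrad v y + p)
      = ((P.A y).mulVec (pgrad v y) ⬝ᵥ pgrad v y + 2 * ((P.A y).mulVec p ⬝ᵥ pgrad v y))
        + (P.A y).mulVec p ⬝ᵥ p := by
    intro y
    have := quad_expand (P.A y) (P.hsymm y) (pgrad v y) p
    linarith
  have i12 : IntegrableOn (fun y => (P.A y).mulVec (pgrad v y) ⬝ᵥ pgrad v y
      + 2 * ((P.A y).mulVec p ⬝ᵥ pgrad v y)) (Set.Icc (0 : Fin n → ℝ) 1) :=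
    (Gv_integrable1 P hv.1).add (Gv_integrable2 P hv.1 p)
  rw [setIntegral_congr_fun measurableSet_Icc fun y _ => e y,
    integral_add i12 (integrableOn_qP P continuous_const continuous_const)]

lemma Tset_nonempty (P : Pack n) (p : Fin n → ℝ) : (Tset P p).Nonempty := by
  refine ⟨Gv P (fun _ => (0:ℝ)) p, ⟨_, Adm.zero, rfl⟩⟩

lemma Tset_bddBelow (P : Pack n) (p : Fin n → ℝ) : BddBelow (Tset P p) := by
  refine ⟨P.C₁ * (p ⬝ᵥ p) - Kf P p, ?_⟩
  rintro r ⟨v, hv, rfl⟩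
  have h1 : P.C₁ * (p ⬝ᵥ p) ≤ Fv P v p := S_lower P p (mem_Sset hv p)
  have h2 := Fv_decomp P hv p
  linarith

lemma Sset_eq (P : Pack n) (p : Fin n → ℝ) :
    Sset P p = (fun r => r + Kf P p) '' Tset P p := by
  ext r
  constructor
  · rintro ⟨v, hv1, hv2, rfl⟩
    refine ⟨Gv P v p, ⟨v, ⟨hv1, hv2⟩, rfl⟩, ?_⟩
    exact (Fv_decomp P ⟨hv1, hv2⟩ p).symm
  · rintro ⟨r', ⟨v, hv, rfl⟩, rfl⟩
    refine ⟨v, hv.1, hv.2, ?_⟩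
    exact (Fv_decomp P hv p).symm

lemma Qf_decomp (P : Pack n) (p : Fin n → ℝ) : Qf P p = Rf P p + Kf P p := by
  have h := Monotone.map_csInf_of_continuousAt
    (f := fun x : ℝ => x + Kf P p) (A := Tset P p)
    (continuous_id.add continuous_const).continuousAt
    (fun a b hab => by dsimp; linarith)
    (Tset_nonempty P p) (Tset_bddBelow P p)
  unfold Qf Rf
  rw [Sset_eq P p, ← h]

lemma Gv_affine (P : Pack n) {v : (Fin n → ℝ) → ℝ} (hv : Adm v)
    {p₁ p₂ : Fin n → ℝ} {a b : ℝ} (hab : a + b = 1) :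
    Gv P v (a • p₁ + b • p₂) = a * Gv P v p₁ + b * Gv P v p₂ := by
  unfold Gv
  have e : ∀ y, ((P.A y).mulVec (pgrad v y) ⬝ᵥ pgrad v y
        + 2 * ((P.A y).mulVec (a • p₁ + b • p₂) ⬝ᵥ pgrad v y))
      = a * ((P.A y).mulVec (pgrad v y) ⬝ᵥ pgrad v y
          + 2 * ((P.A y).mulVec p₁ ⬝ᵥ pgrad v y))
        + b * ((P.A y).mulVec (pgrad v y) ⬝ᵥ pgrad v y
          + 2 * ((P.A y).mulVec p₂ ⬝ᵥ pgrad v y)) := by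
    intro y
    rw [Matrix.mulVec_add, Matrix.mulVec_smul, Matrix.mulVec_smul,
      add_dotProduct, smul_dotProduct, smul_dotProduct]
    simp only [smul_eq_mul]
    have hb : b = 1 - a := by linarith
    subst hb; ring
  have j1 : IntegrableOn (fun y => a * ((P.A y).mulVec (pgrad v y) ⬝ᵥ pgrad v y
      + 2 * ((P.A y).mulVec p₁ ⬝ᵥ pgrad v y))) (Set.Icc (0 : Fin n → ℝ) 1) :=
    ((Gv_integrable1 P hv.1).add (Gv_integrable2 P hv.1 p₁)).const_mul a
  have j2 : IntegrableOn (fun y => b * ((P.A y).mulVec (pgrad v y) ⬝ᵥ pgrad v y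
      + 2 * ((P.A y).mulVec p₂ ⬝ᵥ pgrad v y))) (Set.Icc (0 : Fin n → ℝ) 1) :=
    ((Gv_integrable1 P hv.1).add (Gv_integrable2 P hv.1 p₂)).const_mul b
  rw [setIntegral_congr_fun measurableSet_Icc fun y _ => e y,
    integral_add j1 j2, integral_const_mul, integral_const_mul]

lemma Rf_concave (P : Pack n) : ConcaveOn ℝ Set.univ (Rf P) := by
  refine ⟨convex_univ, fun p₁ _ p₂ _ a b ha hb hab => ?_⟩
  refine le_csInf (Tset_nonempty P _) ?_
  rintro r ⟨v, hv, rfl⟩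
  rw [Gv_affine P hv hab]
  have h1 : Rf P p₁ ≤ Gv P v p₁ := csInf_le (Tset_bddBelow P p₁) ⟨v, hv, rfl⟩
  have h2 : Rf P p₂ ≤ Gv P v p₂ := csInf_le (Tset_bddBelow P p₂) ⟨v, hv, rfl⟩
  have := mul_le_mul_of_nonneg_left h1 ha
  have := mul_le_mul_of_nonneg_left h2 hb
  simp only [smul_eq_mul]
  linarith

lemma Rf_cont (P : Pack n) : Continuous (Rf P) :=
  continuousOn_univ.mp ((Rf_concave P).continuousOn isOpen_univ)

lemma Qf_cont (P : Pack n) : Continuous (Qf P) := by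
  have e : Qf P = fun p => Rf P p + Kf P p := funext (Qf_decomp P)
  rw [e]
  exact (Rf_cont P).add (Kf_cont P)


/-! ### The bilinear form -/

lemma Qf_zero (P : Pack n) : Qf P 0 = 0 := by
  have h1 := Qf_lb P 0
  have h2 := Qf_ub P 0
  simp only [dotProduct_zero, mul_zero] at h1 h2
  linarith

noncomputable def Bf (P : Pack n) (p q : Fin n → ℝ) : ℝ :=
  (Qf P (p + q) - Qf P p - Qf P q) / 2

lemma Bf_symm (P : Pack n) (p q : Fin n → ℝ) : Bf P p q = Bf P q p := by
  unfold Bf; rw [add_comm]; ring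

lemma Bf_self (P : Pack n) (p : Fin n → ℝ) : Bf P p p = Qf P p := by
  have h := Qf_par P p p
  rw [sub_self, Qf_zero] at h
  unfold Bf; linarith

lemma Bf_add_left (P : Pack n) (x y z : Fin n → ℝ) :
    Bf P (x + y) z = Bf P x z + Bf P y z := by
  have hA := Qf_par P (x + z) y
  have hB := Qf_par P (y + z) x
  have hC := Qf_par P z (x - y)
  have hD := Qf_par P x y
  have e1 : x + z + y = x + y + z := by abel
  have e2 : z + (x - y) = x + z - y := by abel
  have e3 : z - (x - y) = y + z - x := by abel
  have e4 : y + z + x = x + y + z := by abel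
  rw [e1] at hA
  rw [e4] at hB
  rw [e2, e3] at hC
  unfold Bf
  linarith

lemma Bf_cont (P : Pack n) (q : Fin n → ℝ) : Continuous fun p => Bf P p q := by
  unfold Bf
  exact ((((Qf_cont P).comp (continuous_id.add continuous_const)).sub
    (Qf_cont P)).sub continuous_const).div_const 2

noncomputable def BfL (P : Pack n) (q : Fin n → ℝ) : (Fin n → ℝ) →L[ℝ] ℝ :=
  (AddMonoidHom.mk' (fun p => Bf P p q) fun x y => Bf_add_left P x y q).toRealLinearMap
    (Bf_cont P q)

lemma BfL_apply (P : Pack n) (q p : Fin n → ℝ) : BfL P q p = Bf P p q := by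
  unfold BfL
  rfl

lemma sum_single (p : Fin n → ℝ) :
    ∑ j, p j • (Pi.single j (1:ℝ) : Fin n → ℝ) = p := by
  funext k
  rw [Finset.sum_apply]
  simp [Pi.single_apply]

lemma Bf_expand (P : Pack n) (p q : Fin n → ℝ) :
    Bf P p q = ∑ j, p j * Bf P (Pi.single j 1) q := by
  calc Bf P p q = BfL P q p := (BfL_apply P q p).symm
  _ = BfL P q (∑ j, p j • (Pi.single j (1:ℝ) : Fin n → ℝ)) := by rw [sum_single]
  _ = ∑ j, p j • BfL P q (Pi.single j 1) := by rw [map_sum]; simp [_root_.map_smul]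
  _ = ∑ j, p j * Bf P (Pi.single j 1) q := by
      refine Finset.sum_congr rfl fun j _ => ?_
      rw [smul_eq_mul, BfL_apply]

lemma Qf_eq_quadform (P : Pack n) (p : Fin n → ℝ) :
    Qf P p = ∑ i, ∑ j, Bf P (Pi.single i 1) (Pi.single j 1) * p j * p i := by
  calc Qf P p = Bf P p p := (Bf_self P p).symm
  _ = ∑ i, p i * Bf P (Pi.single i 1) p := Bf_expand P p p
  _ = ∑ i, p i * ∑ j, p j * Bf P (Pi.single j 1) (Pi.single i 1) := by
      refine Finset.sum_congr rfl fun i _ => ?_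
      rw [Bf_symm, Bf_expand]
  _ = ∑ i, ∑ j, Bf P (Pi.single i 1) (Pi.single j 1) * p j * p i := by
      refine Finset.sum_congr rfl fun i _ => ?_
      rw [Finset.mul_sum]
      refine Finset.sum_congr rfl fun j _ => ?_
      rw [Bf_symm]
      ring

noncomputable def Abar (P : Pack n) : Matrix (Fin n) (Fin n) ℝ :=
  Matrix.of fun i j => Bf P (Pi.single i 1) (Pi.single j 1)

lemma Abar_symm (P : Pack n) : (Abar P).IsSymm := by
  unfold Matrix.IsSymm
  ext i j
  rw [Matrix.transpose_apply]
  exact Bf_symm P _ _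

lemma Abar_quadform (P : Pack n) (p : Fin n → ℝ) :
    (Abar P).mulVec p ⬝ᵥ p = Qf P p := by
  rw [Qf_eq_quadform]
  simp only [Matrix.mulVec, dotProduct, Abar, Matrix.of_apply, Finset.sum_mul]

end Stmt4

/-- The variational cell formula `⟨Āp,p⟩ = inf_v ∫_{𝕋ⁿ} ⟨A(∇v+p), ∇v+p⟩ dy`
defines a quadratic form given by a symmetric matrix `Ā` with `C₁ I ≤ Ā ≤ C₂ I`. -/
theorem stmt4 (n : ℕ) (A : (Fin n → ℝ) → Matrix (Fin n) (Fin n) ℝ)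
    (hmeas : ∀ i j, Measurable (fun y => A y i j))
    (hper : ∀ y (i : Fin n), A (y + Pi.single i 1) = A y)
    (hsymm : ∀ y, (A y).IsSymm)
    (C₁ C₂ : ℝ) (hC₁ : 0 < C₁) (hC : C₁ ≤ C₂)
    (hlb : ∀ y p, C₁ * (p ⬝ᵥ p) ≤ (A y).mulVec p ⬝ᵥ p)
    (hub : ∀ y p, (A y).mulVec p ⬝ᵥ p ≤ C₂ * (p ⬝ᵥ p)) :
    ∃ Abar : Matrix (Fin n) (Fin n) ℝ, Abar.IsSymm ∧
      (∀ p : Fin n → ℝ,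
        Abar.mulVec p ⬝ᵥ p =
          sInf {r : ℝ | ∃ v : (Fin n → ℝ) → ℝ, ContDiff ℝ 1 v ∧
            (∀ y (i : Fin n), v (y + Pi.single i 1) = v y) ∧
            r = ∫ y in Set.Icc (0 : Fin n → ℝ) 1,
              (A y).mulVec (pgrad v y + p) ⬝ᵥ (pgrad v y + p)}) ∧
      (∀ p : Fin n → ℝ,
        C₁ * (p ⬝ᵥ p) ≤ Abar.mulVec p ⬝ᵥ p ∧ Abar.mulVec p ⬝ᵥ p ≤ C₂ * (p ⬝ᵥ p)) := by
  let P : Stmt4.Pack n := ⟨A, C₁, C₂, hmeas, hsymm, hC₁, hC, hlb, hub⟩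
  refine ⟨Stmt4.Abar P, Stmt4.Abar_symm P, fun p => ?_, fun p => ?_⟩
  · rw [Stmt4.Abar_quadform P p]
    rfl
  · rw [Stmt4.Abar_quadform P p]
    exact ⟨Stmt4.Qf_lb P p, Stmt4.Qf_ub P p⟩
end

section
/- Let π : ℝⁿ × 𝕋ⁿ → ℝ be continuous, 1-periodic in the second variable, positive. Define π_ε(x) = π(x, x/ε) and π̄(x) = ∫_{𝕋ⁿ} π(x,y) dy. Then π_ε ⇀ π̄ weakly in L²(Ω) for Ω = 𝕋ⁿ (identifying x/ε modulo the periodicity), i.e., for every φ ∈ L²(Ω), ∫_Ω π_ε(x) φ(x) dx → ∫_Ω π̄(x) φ(x) dx as ε → 0 along ε = 1/k, k ∈ ℕ. -/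
open MeasureTheory Filter Set

variable {n : ℕ}

lemma single_add_aux (i : Fin n) (c : ℝ) :
    (Pi.single i (c + 1) : Fin n → ℝ) = Pi.single i c + Pi.single i 1 := by
  ext j
  by_cases h : j = i <;> simp [Pi.single_apply, h]

/-- Periodicity under integer vector shifts. -/
lemma per_int (f : (Fin n → ℝ) → (Fin n → ℝ) → ℝ)
    (hper : ∀ x y (i : Fin n), f x (y + Pi.single i 1) = f x y)
    (x y : Fin n → ℝ) (m : Fin n → ℤ) :
    f x (y + fun i => (m i : ℝ)) = f x y := by
  have single : ∀ (c : ℤ) (z : Fin n → ℝ) (i : Fin n),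
      f x (z + Pi.single i (c : ℝ)) = f x z := by
    intro c
    induction c using Int.induction_on with
    | zero => intro z i; simp
    | succ c ih =>
      intro z i
      push_cast at ih ⊢
      rw [single_add_aux, ← add_assoc, hper, ih]
    | pred c ih =>
      intro z i
      have h := hper x (z + Pi.single i (-(c:ℝ) - 1)) i
      rw [add_assoc, ← single_add_aux] at h
      simp only [sub_add_cancel] at h
      push_cast at ih ⊢
      rw [← h, ih]
  have key : ∀ s : Finset (Fin n),
      f x (y + ∑ i ∈ s, (Pi.single i (m i : ℝ) : Fin n → ℝ)) = f x y := by
    intro s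
    induction s using Finset.induction_on with
    | empty => simp
    | insert _ _ hns ih =>
      rename_i a s
      rw [Finset.sum_insert hns,
        show y + ((Pi.single a (m a : ℝ) : Fin n → ℝ) + ∑ i ∈ s, (Pi.single i (m i : ℝ) : Fin n → ℝ))
          = (y + ∑ i ∈ s, (Pi.single i (m i : ℝ) : Fin n → ℝ)) + Pi.single a (m a : ℝ) by abel]
      rw [single, ih]
  have hsum : (∑ i : Fin n, (Pi.single i (m i : ℝ) : Fin n → ℝ)) = fun i => (m i : ℝ) := by
    ext j
    rw [Finset.sum_apply]
    simp [Pi.single_apply]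
  rw [← hsum]
  exact key Finset.univ

lemma fract_mem_Icc (y : Fin n → ℝ) :
    (fun i => Int.fract (y i)) ∈ Icc (0 : Fin n → ℝ) 1 := by
  constructor <;> intro i
  · exact Int.fract_nonneg _
  · exact (Int.fract_lt_one _).le

/-- Reduction to the fundamental domain. -/
lemma per_fract (f : (Fin n → ℝ) → (Fin n → ℝ) → ℝ)
    (hper : ∀ x y (i : Fin n), f x (y + Pi.single i 1) = f x y)
    (x y : Fin n → ℝ) :
    f x y = f x (fun i => Int.fract (y i)) := by
  have : y = (fun i => Int.fract (y i)) + fun i => ((⌊y i⌋ : ℤ) : ℝ) := by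
    ext i
    simp only [Pi.add_apply]
    exact (Int.fract_add_floor (y i)).symm
  conv_lhs => rw [this]
  exact per_int f hper x _ _

/-- A global bound on `f` over `Icc 0 1 × ℝⁿ`. -/
lemma per_bound (f : (Fin n → ℝ) → (Fin n → ℝ) → ℝ)
    (hc : Continuous fun p : (Fin n → ℝ) × (Fin n → ℝ) => f p.1 p.2)
    (hper : ∀ x y (i : Fin n), f x (y + Pi.single i 1) = f x y) :
    ∃ M : ℝ, 0 ≤ M ∧ ∀ x ∈ Icc (0 : Fin n → ℝ) 1, ∀ y, |f x y| ≤ M := by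
  have hK : IsCompact ((Icc (0 : Fin n → ℝ) 1) ×ˢ (Icc (0 : Fin n → ℝ) 1)) :=
    isCompact_Icc.prod isCompact_Icc
  obtain ⟨C, hC⟩ := hK.exists_bound_of_continuousOn hc.continuousOn
  refine ⟨max C 0, le_max_right _ _, fun x hx y => ?_⟩
  rw [per_fract f hper]
  calc |f x fun i => Int.fract (y i)| ≤ C := by
        simpa using hC (x, fun i => Int.fract (y i)) ⟨hx, fract_mem_Icc y⟩
    _ ≤ max C 0 := le_max_left _ _

/-- Uniform continuity in the first variable. -/
lemma per_unifcont (f : (Fin n → ℝ) → (Fin n → ℝ) → ℝ)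
    (hc : Continuous fun p : (Fin n → ℝ) × (Fin n → ℝ) => f p.1 p.2)
    {ε : ℝ} (hε : 0 < ε) :
    ∃ δ > 0, ∀ x ∈ Icc (0 : Fin n → ℝ) 1, ∀ x' ∈ Icc (0 : Fin n → ℝ) 1,
      dist x x' < δ → ∀ y ∈ Icc (0 : Fin n → ℝ) 1, |f x y - f x' y| ≤ ε := by
  have hK : IsCompact ((Icc (0 : Fin n → ℝ) 1) ×ˢ (Icc (0 : Fin n → ℝ) 1)) :=
    isCompact_Icc.prod isCompact_Icc
  have huc := hK.uniformContinuousOn_of_continuous hc.continuousOn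
  rw [Metric.uniformContinuousOn_iff] at huc
  obtain ⟨δ, hδ, h⟩ := huc ε hε
  refine ⟨δ, hδ, fun x hx x' hx' hd y hy => ?_⟩
  have := h (x, y) ⟨hx, hy⟩ (x', y) ⟨hx', hy⟩ (by simpa [Prod.dist_eq, hδ] using hd)
  rw [Real.dist_eq] at this
  exact this.le

lemma box_int (g : (Fin n → ℝ) → ℝ) (k : ℕ) (hk : 1 ≤ k) (j : Fin n → Fin k) :
    ∫ y in univ.pi (fun _ : Fin n => Ico (0:ℝ) 1),
        g ((k:ℝ)⁻¹ • (y + fun i => (j i : ℝ)))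
      = (k:ℝ)^n * ∫ x in univ.pi (fun i => Ico ((j i : ℝ)/k) (((j i:ℝ)+1)/k)), g x := by
  have hkpos : (0:ℝ) < k := by exact_mod_cast hk
  set jv : Fin n → ℝ := fun i => (j i : ℝ) with hjv
  set B : Set (Fin n → ℝ) := univ.pi (fun i => Ico ((j i : ℝ)/k) (((j i:ℝ)+1)/k)) with hB
  set Q : Set (Fin n → ℝ) := univ.pi (fun _ : Fin n => Ico (0:ℝ) 1) with hQ
  have hQmeas : MeasurableSet Q := MeasurableSet.univ_pi (fun i => measurableSet_Ico)
  have hBmeas : MeasurableSet B := MeasurableSet.univ_pi (fun i => measurableSet_Ico)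
  have hmem : ∀ y : Fin n → ℝ, y ∈ Q ↔ (k:ℝ)⁻¹ • (y + jv) ∈ B := by
    intro y
    simp only [hQ, hB, Set.mem_pi, Set.mem_univ, forall_true_left, Set.mem_Ico]
    refine forall_congr' fun i => ?_
    have : ((k:ℝ)⁻¹ • (y + jv)) i = (y i + jv i) / k := by
      simp [div_eq_inv_mul]
    rw [this]
    constructor
    · rintro ⟨h0, h1⟩
      constructor
      · rw [div_le_div_iff_of_pos_right hkpos]; linarith [h0]
      · rw [div_lt_div_iff_of_pos_right hkpos]; linarith [h1]
    · rintro ⟨h0, h1⟩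
      rw [div_le_div_iff_of_pos_right hkpos] at h0
      rw [div_lt_div_iff_of_pos_right hkpos] at h1
      constructor <;> [linarith; linarith]
  have step1 : ∫ y in Q, g ((k:ℝ)⁻¹ • (y + jv))
      = ∫ y, B.indicator g ((k:ℝ)⁻¹ • (y + jv)) := by
    rw [← integral_indicator hQmeas]
    congr 1
    ext y
    by_cases hy : y ∈ Q
    · rw [Set.indicator_of_mem hy, Set.indicator_of_mem ((hmem y).1 hy)]
    · rw [Set.indicator_of_notMem hy,
        Set.indicator_of_notMem (fun h => hy ((hmem y).2 h))]
  have step2 : ∫ y, B.indicator g ((k:ℝ)⁻¹ • (y + jv))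
      = ∫ y, B.indicator g ((k:ℝ)⁻¹ • y) := by
    exact integral_add_right_eq_self (fun y => B.indicator g ((k:ℝ)⁻¹ • y)) jv
  have step3 : ∫ y, B.indicator g ((k:ℝ)⁻¹ • y)
      = |(((k:ℝ)⁻¹) ^ (Module.finrank ℝ (Fin n → ℝ)))⁻¹| • ∫ y, B.indicator g y :=
    Measure.integral_comp_smul volume (B.indicator g) ((k:ℝ)⁻¹)
  have hrank : Module.finrank ℝ (Fin n → ℝ) = n := by
    simp [Module.finrank_fintype_fun_eq_card]
  rw [step1, step2, step3, hrank, integral_indicator hBmeas]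
  rw [smul_eq_mul]
  congr 1
  rw [← inv_pow, inv_inv, abs_of_nonneg (by positivity)]

lemma box_subset (k : ℕ) (hk : 1 ≤ k) (j : Fin n → Fin k) :
    univ.pi (fun i => Ico ((j i : ℝ)/k) (((j i:ℝ)+1)/k)) ⊆ Icc (0 : Fin n → ℝ) 1 := by
  intro x hx
  have hkpos : (0:ℝ) < k := by exact_mod_cast hk
  constructor <;> intro i <;> have h := hx i (Set.mem_univ i)
  · exact le_trans (by positivity) h.1
  · show x i ≤ (1:ℝ)
    refine le_trans h.2.le ?_
    rw [div_le_one hkpos]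
    have : (j i : ℝ) + 1 ≤ (k : ℝ) := by exact_mod_cast (j i).2
    exact this

lemma box_union (k : ℕ) (hk : 1 ≤ k) :
    ⋃ j : Fin n → Fin k, univ.pi (fun i => Ico ((j i : ℝ)/k) (((j i:ℝ)+1)/k))
      = univ.pi (fun _ : Fin n => Ico (0:ℝ) 1) := by
  have hkpos : (0:ℝ) < k := by exact_mod_cast hk
  ext x
  simp only [Set.mem_iUnion, Set.mem_pi, Set.mem_univ, forall_true_left, Set.mem_Ico]
  constructor
  · rintro ⟨j, hj⟩ i
    have h := hj i
    constructor
    · exact le_trans (by positivity) h.1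
    · refine lt_of_lt_of_le h.2 ?_
      rw [div_le_one hkpos]
      exact_mod_cast (j i).2
  · intro hx
    have hfloor : ∀ i, 0 ≤ ⌊(k:ℝ) * x i⌋ ∧ ⌊(k:ℝ) * x i⌋ < k := by
      intro i
      constructor
      · exact Int.floor_nonneg.2 (by nlinarith [(hx i).1])
      · have : (k:ℝ) * x i < k := by nlinarith [(hx i).2]
        exact_mod_cast Int.floor_lt.2 (by exact_mod_cast this)
    refine ⟨fun i => ⟨(⌊(k:ℝ) * x i⌋).toNat, ?_⟩, fun i => ?_⟩
    · have h1 := (hfloor i).1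
      have h2 := (hfloor i).2
      omega
    · have h1 := (hfloor i).1
      have h2 := (hfloor i).2
      have hcast : (((⌊(k:ℝ) * x i⌋).toNat : ℕ) : ℝ) = ((⌊(k:ℝ) * x i⌋ : ℤ) : ℝ) := by
        exact_mod_cast congrArg (fun z : ℤ => (z : ℝ)) (Int.toNat_of_nonneg h1)
      simp only [Fin.val_mk, hcast]
      constructor
      · rw [div_le_iff₀ hkpos]
        have := Int.floor_le ((k:ℝ) * x i)
        linarith [this]
      · rw [lt_div_iff₀ hkpos]
        have := Int.lt_floor_add_one ((k:ℝ) * x i)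
        linarith [this]

lemma box_disjoint (k : ℕ) (hk : 1 ≤ k) {j j' : Fin n → Fin k} (hjj : j ≠ j') :
    Disjoint (univ.pi (fun i => Ico ((j i : ℝ)/k) (((j i:ℝ)+1)/k)))
      (univ.pi (fun i => Ico ((j' i : ℝ)/k) (((j' i:ℝ)+1)/k))) := by
  have hkpos : (0:ℝ) < k := by exact_mod_cast hk
  rw [Set.disjoint_left]
  rintro x hx hx'
  apply hjj
  funext i
  have h1 := hx i (Set.mem_univ i)
  have h2 := hx' i (Set.mem_univ i)
  have e1 : ((j i : ℕ) : ℝ) < ((j' i : ℕ) : ℝ) + 1 := by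
    have := lt_of_le_of_lt h1.1 h2.2
    rw [div_lt_div_iff_of_pos_right hkpos] at this
    exact this
  have e2 : ((j' i : ℕ) : ℝ) < ((j i : ℕ) : ℝ) + 1 := by
    have := lt_of_le_of_lt h2.1 h1.2
    rw [div_lt_div_iff_of_pos_right hkpos] at this
    exact this
  have : (j i : ℕ) = (j' i : ℕ) := by
    have e1' : (j i : ℕ) < (j' i : ℕ) + 1 := by exact_mod_cast e1
    have e2' : (j' i : ℕ) < (j i : ℕ) + 1 := by exact_mod_cast e2
    omega
  exact Fin.ext this

lemma decomp (g : (Fin n → ℝ) → ℝ) (hg : IntegrableOn g (Icc (0 : Fin n → ℝ) 1))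
    (k : ℕ) (hk : 1 ≤ k) :
    ∫ x in Icc (0 : Fin n → ℝ) 1, g x
      = ∑ j : Fin n → Fin k, ((k:ℝ)^n)⁻¹ *
          ∫ y in univ.pi (fun _ : Fin n => Ico (0:ℝ) 1),
            g ((k:ℝ)⁻¹ • (y + fun i => (j i : ℝ))) := by
  have hkpos : (0:ℝ) < k := by exact_mod_cast hk
  have hae : (univ.pi (fun _ : Fin n => Ico (0:ℝ) 1)) =ᵐ[volume] Icc (0 : Fin n → ℝ) 1 := by
    rw [MeasureTheory.volume_pi]
    exact MeasureTheory.Measure.univ_pi_Ico_ae_eq_Icc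
  have h1 : ∫ x in Icc (0 : Fin n → ℝ) 1, g x
      = ∫ x in univ.pi (fun _ : Fin n => Ico (0:ℝ) 1), g x :=
    (setIntegral_congr_set hae).symm
  have h2 : ∫ x in univ.pi (fun _ : Fin n => Ico (0:ℝ) 1), g x
      = ∑ j : Fin n → Fin k, ∫ x in univ.pi (fun i => Ico ((j i : ℝ)/k) (((j i:ℝ)+1)/k)), g x := by
    rw [← box_union (n := n) k hk,
      show (⋃ j : Fin n → Fin k, univ.pi fun i => Ico ((j i : ℝ)/k) (((j i:ℝ)+1)/k))
          = ⋃ j ∈ (Finset.univ : Finset (Fin n → Fin k)),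
              univ.pi fun i => Ico ((j i : ℝ)/k) (((j i:ℝ)+1)/k) by simp,
      integral_biUnion_finset Finset.univ
        (fun j _ => MeasurableSet.univ_pi (fun i => measurableSet_Ico))
        (fun j _ j' _ hjj => box_disjoint k hk hjj)
        (fun j _ => hg.mono_set (box_subset k hk j))]
  rw [h1, h2]
  congr 1
  funext j
  rw [box_int g k hk j, ← mul_assoc, inv_mul_cancel₀ (by positivity), one_mul]
lemma vol_Icc_pi : volume (Icc (0 : Fin n → ℝ) 1) = 1 := by
  rw [Real.volume_Icc_pi]
  simp

lemma restrict_univ_one :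
    ((volume.restrict (Icc (0 : Fin n → ℝ) 1)) Set.univ).toReal = 1 := by
  rw [Measure.restrict_apply_univ, vol_Icc_pi, ENNReal.toReal_one]

lemma Q_subset : univ.pi (fun _ : Fin n => Ico (0:ℝ) 1) ⊆ Icc (0 : Fin n → ℝ) 1 := by
  intro x hx
  constructor <;> intro i <;> have h := hx i (Set.mem_univ i)
  · exact h.1
  · exact h.2.le

lemma vol_Q : volume (univ.pi (fun _ : Fin n => Ico (0:ℝ) 1)) = 1 := by
  rw [MeasureTheory.volume_pi, MeasureTheory.Measure.pi_pi]
  simp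

/-- The core homogenization lemma for continuous periodic integrands. -/
lemma core (f : (Fin n → ℝ) → (Fin n → ℝ) → ℝ)
    (hc : Continuous fun p : (Fin n → ℝ) × (Fin n → ℝ) => f p.1 p.2)
    (hper : ∀ x y (i : Fin n), f x (y + Pi.single i 1) = f x y) :
    Tendsto (fun k : ℕ => ∫ x in Icc (0 : Fin n → ℝ) 1, f x ((k:ℝ) • x)) atTop
      (nhds (∫ x in Icc (0 : Fin n → ℝ) 1, ∫ y in Icc (0 : Fin n → ℝ) 1, f x y)) := by
  haveI : IsFiniteMeasure (volume.restrict (Icc (0 : Fin n → ℝ) 1)) :=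
    ⟨by rw [Measure.restrict_apply_univ, vol_Icc_pi]; exact ENNReal.one_lt_top⟩
  haveI : IsFiniteMeasure (volume.restrict (univ.pi (fun _ : Fin n => Ico (0:ℝ) 1))) :=
    ⟨by rw [Measure.restrict_apply_univ, vol_Q]; exact ENNReal.one_lt_top⟩
  obtain ⟨M, hM0, hM⟩ := per_bound f hc hper
  set Q : Set (Fin n → ℝ) := univ.pi (fun _ : Fin n => Ico (0:ℝ) 1) with hQdef
  have hQmeas : MeasurableSet Q := MeasurableSet.univ_pi (fun i => measurableSet_Ico)
  set F : (Fin n → ℝ) → ℝ := fun x => ∫ y in Icc (0 : Fin n → ℝ) 1, f x y with hFdef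
  have hFsm : StronglyMeasurable F :=
    (hc.stronglyMeasurable).integral_prod_right'
  have hFbound : ∀ x ∈ Icc (0 : Fin n → ℝ) 1, |F x| ≤ M := by
    intro x hx
    rw [← Real.norm_eq_abs]
    calc ‖F x‖ ≤ M * ((volume.restrict (Icc (0 : Fin n → ℝ) 1)) Set.univ).toReal := by
          apply norm_integral_le_of_norm_le_const
          filter_upwards [ae_restrict_mem measurableSet_Icc] with y hy
          rw [Real.norm_eq_abs]
          exact hM x hx y
      _ = M := by rw [restrict_univ_one, mul_one]
  have hFint : IntegrableOn F (Icc (0 : Fin n → ℝ) 1) := by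
    refine Integrable.mono' (integrable_const M) hFsm.aestronglyMeasurable ?_
    filter_upwards [ae_restrict_mem measurableSet_Icc] with x hx
    rw [Real.norm_eq_abs]; exact hFbound x hx
  have hae : Q =ᵐ[volume] Icc (0 : Fin n → ℝ) 1 := by
    rw [hQdef, MeasureTheory.volume_pi]
    exact MeasureTheory.Measure.univ_pi_Ico_ae_eq_Icc
  rw [Metric.tendsto_atTop]
  intro ε hε
  obtain ⟨δ, hδpos, hδ⟩ := per_unifcont f hc (show (0:ℝ) < ε/4 by linarith)
  obtain ⟨N₀, hN₀⟩ := exists_nat_one_div_lt hδpos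
  refine ⟨N₀ + 1, fun k hk => ?_⟩
  have hk1 : 1 ≤ k := le_trans (Nat.le_add_left 1 N₀) hk
  have hkpos : (0:ℝ) < k := by exact_mod_cast hk1
  have hkδ : 1 / (k:ℝ) < δ := by
    refine lt_of_le_of_lt ?_ hN₀
    apply one_div_le_one_div_of_le (by positivity)
    exact_mod_cast hk
  -- the pieces
  set jvv : (Fin n → Fin k) → (Fin n → ℝ) := fun j => (fun i => ((j i : ℕ) : ℝ)) with hjvv
  set c : (Fin n → Fin k) → (Fin n → ℝ) → (Fin n → ℝ) :=
    fun j y => (k:ℝ)⁻¹ • (y + jvv j) with hcdef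
  have hcIcc : ∀ j (y : Fin n → ℝ), y ∈ Icc (0 : Fin n → ℝ) 1 → c j y ∈ Icc (0 : Fin n → ℝ) 1 := by
    intro j y hy
    constructor <;> intro i
    · show (0:ℝ) ≤ (k:ℝ)⁻¹ * (y i + (j i : ℕ))
      have h0 : (0:ℝ) ≤ y i := hy.1 i
      exact mul_nonneg (by positivity) (add_nonneg h0 (Nat.cast_nonneg _))
    · show (k:ℝ)⁻¹ * (y i + (j i : ℕ)) ≤ (1:ℝ)
      rw [inv_mul_le_iff₀ hkpos, mul_one]
      have h1 : y i ≤ 1 := hy.2 i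
      have h2 : ((j i : ℕ) : ℝ) + 1 ≤ (k:ℝ) := by exact_mod_cast (j i).2
      linarith
  have hx0Icc : ∀ j : Fin n → Fin k, (k:ℝ)⁻¹ • jvv j ∈ Icc (0 : Fin n → ℝ) 1 := by
    intro j
    have h := hcIcc j 0 ⟨le_refl _, zero_le_one⟩
    have h0 : c j (0 : Fin n → ℝ) = (k:ℝ)⁻¹ • jvv j := by
      rw [hcdef]; simp
    rwa [h0] at h
  have hdist : ∀ j (y : Fin n → ℝ), y ∈ Icc (0 : Fin n → ℝ) 1 →
      dist (c j y) ((k:ℝ)⁻¹ • jvv j) < δ := by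
    intro j y hy
    rw [dist_pi_lt_iff hδpos]
    intro i
    show dist ((k:ℝ)⁻¹ * (y i + (j i : ℕ))) ((k:ℝ)⁻¹ * (j i : ℕ)) < δ
    rw [Real.dist_eq, show (k:ℝ)⁻¹ * (y i + (j i : ℕ)) - (k:ℝ)⁻¹ * (j i : ℕ)
      = (k:ℝ)⁻¹ * y i by ring]
    have h0 := hy.1 i
    have h1 := hy.2 i
    rw [abs_of_nonneg (mul_nonneg (by positivity) h0)]
    calc (k:ℝ)⁻¹ * y i ≤ (k:ℝ)⁻¹ * 1 := by
          apply mul_le_mul_of_nonneg_left h1 (by positivity)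
      _ = 1 / (k:ℝ) := by ring
      _ < δ := hkδ
  -- integrability of pieces
  have hgcont : Continuous fun x => f x ((k:ℝ) • x) :=
    hc.comp (continuous_id.prodMk (continuous_id.const_smul (k:ℝ)))
  have hgint : IntegrableOn (fun x => f x ((k:ℝ) • x)) (Icc (0 : Fin n → ℝ) 1) :=
    hgcont.continuousOn.integrableOn_compact isCompact_Icc
  have hccont : ∀ j, Continuous (c j) := by
    intro j
    exact ((continuous_id.add continuous_const : Continuous fun y : Fin n → ℝ => y + jvv j)).const_smul ((k:ℝ)⁻¹)
  have hint1 : ∀ j, IntegrableOn (fun y => f (c j y) y) Q := by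
    intro j
    refine ((hc.comp ((hccont j).prodMk continuous_id)).continuousOn.integrableOn_compact
      isCompact_Icc).mono_set Q_subset
  have hint2 : ∀ j, IntegrableOn (fun y => F (c j y)) Q := by
    intro j
    refine Integrable.mono' (integrable_const M)
      (hFsm.comp_measurable (hccont j).measurable).aestronglyMeasurable ?_
    filter_upwards [ae_restrict_mem hQmeas] with y hy
    rw [Real.norm_eq_abs]
    exact hFbound _ (hcIcc j _ (Q_subset hy))
  -- identify the oscillating integral
  have hosc : ∀ j (y : Fin n → ℝ), f (c j y) ((k:ℝ) • (c j y)) = f (c j y) y := by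
    intro j y
    have hsmul : (k:ℝ) • (c j y) = y + jvv j := by
      rw [hcdef, smul_smul, mul_inv_cancel₀ (ne_of_gt hkpos), one_smul]
    rw [hsmul]
    have : jvv j = fun i => (((j i : ℕ) : ℤ) : ℝ) := by
      ext i; push_cast; rfl
    rw [this]
    exact per_int f hper _ y (fun i => ((j i : ℕ) : ℤ))
  -- decompositions
  have hA : ∫ x in Icc (0 : Fin n → ℝ) 1, f x ((k:ℝ) • x)
      = ∑ j : Fin n → Fin k, ((k:ℝ)^n)⁻¹ * ∫ y in Q, f (c j y) y := by
    rw [decomp (fun x => f x ((k:ℝ) • x)) hgint k hk1]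
    apply Finset.sum_congr rfl
    intro j _
    congr 1
    exact setIntegral_congr_fun hQmeas (fun y _ => hosc j y)
  have hB : ∫ x in Icc (0 : Fin n → ℝ) 1, F x
      = ∑ j : Fin n → Fin k, ((k:ℝ)^n)⁻¹ * ∫ y in Q, F (c j y) :=
    decomp F hFint k hk1
  -- per-box estimates
  have hest : ∀ j : Fin n → Fin k,
      |(∫ y in Q, f (c j y) y) - ∫ y in Q, F (c j y)| ≤ ε/2 := by
    intro j
    set x0 : Fin n → ℝ := (k:ℝ)⁻¹ • jvv j with hx0def
    have hx0 := hx0Icc j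
    have hint0 : IntegrableOn (fun y => f x0 y) Q :=
      ((hc.comp (continuous_const.prodMk continuous_id)).continuousOn.integrableOn_compact
        isCompact_Icc).mono_set Q_subset
    have hintc : IntegrableOn (fun _ : Fin n → ℝ => F x0) Q := integrable_const _
    have hT2 : ∫ y in Q, f x0 y = F x0 := setIntegral_congr_set hae
    have hconst : ∫ _y in Q, F x0 = F x0 := by
      rw [setIntegral_const, measureReal_def, vol_Q, ENNReal.toReal_one, one_smul]
    have e1 : (∫ y in Q, f (c j y) y) - (∫ y in Q, F (c j y))
        = (∫ y in Q, (f (c j y) y - f x0 y)) + ∫ y in Q, (F x0 - F (c j y)) := by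
      rw [integral_sub (hint1 j) hint0, integral_sub hintc (hint2 j), hT2, hconst]
      ring
    rw [e1]
    have hQ1 : ((volume.restrict Q) Set.univ).toReal = 1 := by
      rw [Measure.restrict_apply_univ, vol_Q, ENNReal.toReal_one]
    have b1 : ‖∫ y in Q, (f (c j y) y - f x0 y)‖ ≤ ε/4 := by
      calc ‖∫ y in Q, (f (c j y) y - f x0 y)‖
          ≤ (ε/4) * ((volume.restrict Q) Set.univ).toReal := by
            apply norm_integral_le_of_norm_le_const
            filter_upwards [ae_restrict_mem hQmeas] with y hy
            have hyI := Q_subset hy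
            rw [Real.norm_eq_abs]
            exact hδ _ (hcIcc j y hyI) _ hx0 (hdist j y hyI) y hyI
        _ = ε/4 := by rw [hQ1, mul_one]
    have b2 : ‖∫ y in Q, (F x0 - F (c j y))‖ ≤ ε/4 := by
      calc ‖∫ y in Q, (F x0 - F (c j y))‖
          ≤ (ε/4) * ((volume.restrict Q) Set.univ).toReal := by
            apply norm_integral_le_of_norm_le_const
            filter_upwards [ae_restrict_mem hQmeas] with y hy
            have hyI := Q_subset hy
            rw [Real.norm_eq_abs]
            have hFF : F x0 - F (c j y) = ∫ z in Icc (0 : Fin n → ℝ) 1, (f x0 z - f (c j y) z) := by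
              rw [integral_sub]
              · exact (hc.comp (continuous_const.prodMk continuous_id)).continuousOn.integrableOn_compact
                  isCompact_Icc
              · exact (hc.comp (continuous_const.prodMk continuous_id)).continuousOn.integrableOn_compact
                  isCompact_Icc
            rw [hFF, ← Real.norm_eq_abs]
            calc ‖∫ z in Icc (0 : Fin n → ℝ) 1, (f x0 z - f (c j y) z)‖
                ≤ (ε/4) * ((volume.restrict (Icc (0 : Fin n → ℝ) 1)) Set.univ).toReal := by
                  apply norm_integral_le_of_norm_le_const
                  filter_upwards [ae_restrict_mem measurableSet_Icc] with z hz
                  rw [Real.norm_eq_abs]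
                  have := hδ _ (hcIcc j y hyI) _ hx0 (hdist j y hyI) z hz
                  rw [abs_sub_comm] at this
                  exact this
              _ = ε/4 := by rw [restrict_univ_one, mul_one]
        _ = ε/4 := by rw [hQ1, mul_one]
    rw [Real.norm_eq_abs] at b1 b2
    calc |(∫ y in Q, (f (c j y) y - f x0 y)) + ∫ y in Q, (F x0 - F (c j y))|
        ≤ |∫ y in Q, (f (c j y) y - f x0 y)| + |∫ y in Q, (F x0 - F (c j y))| :=
          abs_add_le _ _
      _ ≤ ε/4 + ε/4 := add_le_add b1 b2
      _ = ε/2 := by ring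
  -- sum up
  have hkn : (0:ℝ) < (k:ℝ)^n := by positivity
  rw [Real.dist_eq, hA]
  rw [show (∫ x in Icc (0 : Fin n → ℝ) 1, ∫ y in Icc (0 : Fin n → ℝ) 1, f x y)
      = ∑ j : Fin n → Fin k, ((k:ℝ)^n)⁻¹ * ∫ y in Q, F (c j y) from hB]
  rw [← Finset.sum_sub_distrib]
  calc |∑ j : Fin n → Fin k, (((k:ℝ)^n)⁻¹ * (∫ y in Q, f (c j y) y)
          - ((k:ℝ)^n)⁻¹ * ∫ y in Q, F (c j y))|
      ≤ ∑ j : Fin n → Fin k, |((k:ℝ)^n)⁻¹ * (∫ y in Q, f (c j y) y)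
          - ((k:ℝ)^n)⁻¹ * ∫ y in Q, F (c j y)| := Finset.abs_sum_le_sum_abs _ _
    _ ≤ ∑ _j : Fin n → Fin k, ((k:ℝ)^n)⁻¹ * (ε/2) := by
        apply Finset.sum_le_sum
        intro j _
        rw [← mul_sub, abs_mul, abs_of_nonneg (by positivity)]
        exact mul_le_mul_of_nonneg_left (hest j) (by positivity)
    _ = (Fintype.card (Fin n → Fin k) : ℝ) * (((k:ℝ)^n)⁻¹ * (ε/2)) := by
        rw [Finset.sum_const, Finset.card_univ, nsmul_eq_mul]
    _ = ε/2 := by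
        rw [Fintype.card_fun, Fintype.card_fin, Fintype.card_fin]
        push_cast
        field_simp
    _ < ε := by linarith
/-- Weak `L²` convergence of periodically oscillating functions: for `π(x,y)`
continuous, `1`-periodic and positive in the fast variable, and `ε = 1/k`,
`∫ π(x, kx) φ(x) dx → ∫ (∫_{𝕋ⁿ} π(x,y) dy) φ(x) dx` for every `φ ∈ L²`. -/
theorem stmt18 (n : ℕ) (pi : (Fin n → ℝ) → (Fin n → ℝ) → ℝ)
    (hc : Continuous fun p : (Fin n → ℝ) × (Fin n → ℝ) => pi p.1 p.2)
    (hper : ∀ x y (i : Fin n), pi x (y + Pi.single i 1) = pi x y)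
    (hpos : ∀ x y, 0 < pi x y)
    (φ : (Fin n → ℝ) → ℝ)
    (hφ : MemLp φ 2 (volume.restrict (Set.Icc (0 : Fin n → ℝ) 1))) :
    Tendsto (fun k : ℕ =>
        ∫ x in Set.Icc (0 : Fin n → ℝ) 1, pi x ((k : ℝ) • x) * φ x) atTop
      (nhds (∫ x in Set.Icc (0 : Fin n → ℝ) 1,
        (∫ y in Set.Icc (0 : Fin n → ℝ) 1, pi x y) * φ x)) := by
  haveI hfin : IsFiniteMeasure (volume.restrict (Icc (0 : Fin n → ℝ) 1)) :=
    ⟨by rw [Measure.restrict_apply_univ, vol_Icc_pi]; exact ENNReal.one_lt_top⟩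
  set μ : Measure (Fin n → ℝ) := volume.restrict (Icc (0 : Fin n → ℝ) 1) with hμ
  obtain ⟨M, hM0, hM⟩ := per_bound pi hc hper
  have hφ1 : Integrable φ μ :=
    (hφ.mono_exponent (by norm_num)).integrable le_rfl
  set F : (Fin n → ℝ) → ℝ := fun x => ∫ y in Icc (0 : Fin n → ℝ) 1, pi x y with hFdef
  have hFsm : StronglyMeasurable F := (hc.stronglyMeasurable).integral_prod_right'
  have hFbound : ∀ x ∈ Icc (0 : Fin n → ℝ) 1, |F x| ≤ M := by
    intro x hx
    rw [← Real.norm_eq_abs]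
    calc ‖F x‖ ≤ M * ((volume.restrict (Icc (0 : Fin n → ℝ) 1)) Set.univ).toReal := by
          apply norm_integral_le_of_norm_le_const
          filter_upwards [ae_restrict_mem measurableSet_Icc] with y hy
          rw [Real.norm_eq_abs]
          exact hM x hx y
      _ = M := by rw [restrict_univ_one, mul_one]
  rw [Metric.tendsto_atTop]
  intro ε hε
  have hε4 : (0:ℝ) < ε/(4*(M+1)) := by positivity
  obtain ⟨ψ, hψ_close, hψint⟩ := hφ1.exists_boundedContinuous_integral_sub_le hε4
  -- core applied to pi x y * ψ x
  have hcore := core (fun x y => pi x y * ψ x)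
    (hc.mul (ψ.continuous.comp continuous_fst))
    (fun x y i => by beta_reduce; rw [hper])
  have hinner : ∀ x : Fin n → ℝ,
      (∫ y in Icc (0 : Fin n → ℝ) 1, pi x y * ψ x) = F x * ψ x := fun x =>
    integral_mul_const _ _
  simp only [hinner] at hcore
  rw [Metric.tendsto_atTop] at hcore
  obtain ⟨N, hN⟩ := hcore (ε/2) (by linarith)
  refine ⟨N, fun k hk => ?_⟩
  -- the key approximation bound
  have hsub : Integrable (fun x => φ x - ψ x) μ := hφ1.sub hψint
  have key : ∀ g : (Fin n → ℝ) → ℝ, AEStronglyMeasurable g μ →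
      (∀ x ∈ Icc (0 : Fin n → ℝ) 1, |g x| ≤ M) →
      |∫ x, g x * (φ x - ψ x) ∂μ| ≤ ε/4 := by
    intro g hgsm hgb
    have hgint : Integrable (fun x => g x * (φ x - ψ x)) μ := by
      refine Integrable.bdd_mul (c := M) hsub hgsm ?_
      filter_upwards [ae_restrict_mem measurableSet_Icc] with x hx
      rw [Real.norm_eq_abs]; exact hgb x hx
    rw [← Real.norm_eq_abs]
    calc ‖∫ x, g x * (φ x - ψ x) ∂μ‖
        ≤ ∫ x, ‖g x * (φ x - ψ x)‖ ∂μ := norm_integral_le_integral_norm _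
      _ ≤ ∫ x, M * ‖φ x - ψ x‖ ∂μ := by
          apply integral_mono_of_nonneg (Eventually.of_forall fun x => norm_nonneg _)
            (hsub.norm.const_mul M)
          filter_upwards [ae_restrict_mem measurableSet_Icc] with x hx
          rw [norm_mul]
          exact mul_le_mul_of_nonneg_right
            (le_trans (le_of_eq (Real.norm_eq_abs _)) (hgb x hx)) (norm_nonneg _)
      _ = M * ∫ x, ‖φ x - ψ x‖ ∂μ := integral_const_mul M _
      _ ≤ M * (ε/(4*(M+1))) := mul_le_mul_of_nonneg_left hψ_close hM0
      _ ≤ ε/4 := by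
          rw [mul_div_assoc']
          rw [div_le_div_iff₀ (by positivity) (by norm_num : (0:ℝ) < 4)]
          nlinarith [hM0, hε.le]
  -- the two approximation steps
  have hπcont : Continuous fun x => pi x ((k:ℝ) • x) :=
    hc.comp (continuous_id.prodMk (continuous_id.const_smul (k:ℝ)))
  have hπφ : Integrable (fun x => pi x ((k:ℝ) • x) * φ x) μ := by
    refine Integrable.bdd_mul (c := M) hφ1 hπcont.aestronglyMeasurable ?_
    filter_upwards [ae_restrict_mem measurableSet_Icc] with x hx
    rw [Real.norm_eq_abs]; exact hM x hx _
  have hπψ : Integrable (fun x => pi x ((k:ℝ) • x) * ψ x) μ := by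
    refine Integrable.bdd_mul (c := M) hψint hπcont.aestronglyMeasurable ?_
    filter_upwards [ae_restrict_mem measurableSet_Icc] with x hx
    rw [Real.norm_eq_abs]; exact hM x hx _
  have hFφ : Integrable (fun x => F x * φ x) μ := by
    refine Integrable.bdd_mul (c := M) hφ1 hFsm.aestronglyMeasurable ?_
    filter_upwards [ae_restrict_mem measurableSet_Icc] with x hx
    rw [Real.norm_eq_abs]; exact hFbound x hx
  have hFψ : Integrable (fun x => F x * ψ x) μ := by
    refine Integrable.bdd_mul (c := M) hψint hFsm.aestronglyMeasurable ?_
    filter_upwards [ae_restrict_mem measurableSet_Icc] with x hx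
    rw [Real.norm_eq_abs]; exact hFbound x hx
  have step1 : |(∫ x, pi x ((k:ℝ) • x) * φ x ∂μ) - ∫ x, pi x ((k:ℝ) • x) * ψ x ∂μ| ≤ ε/4 := by
    rw [← integral_sub hπφ hπψ]
    have : (fun x => pi x ((k:ℝ) • x) * φ x - pi x ((k:ℝ) • x) * ψ x)
        = fun x => pi x ((k:ℝ) • x) * (φ x - ψ x) := by funext x; ring
    rw [this]
    exact key _ hπcont.aestronglyMeasurable (fun x hx => hM x hx _)
  have step3 : |(∫ x, F x * ψ x ∂μ) - ∫ x, F x * φ x ∂μ| ≤ ε/4 := by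
    rw [← integral_sub hFψ hFφ]
    have : (fun x => F x * ψ x - F x * φ x) = fun x => F x * (-(φ x - ψ x)) := by
      funext x; ring
    rw [this]
    have : (∫ x, F x * (-(φ x - ψ x)) ∂μ) = -∫ x, F x * (φ x - ψ x) ∂μ := by
      rw [← integral_neg]; congr 1; funext x; ring
    rw [this, abs_neg]
    exact key _ hFsm.aestronglyMeasurable hFbound
  have step2 := hN k hk
  rw [Real.dist_eq] at step2 ⊢
  calc |(∫ x, pi x ((k:ℝ) • x) * φ x ∂μ) - ∫ x, F x * φ x ∂μ|
      ≤ |(∫ x, pi x ((k:ℝ) • x) * φ x ∂μ) - ∫ x, pi x ((k:ℝ) • x) * ψ x ∂μ|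
        + |(∫ x, pi x ((k:ℝ) • x) * ψ x ∂μ) - ∫ x, F x * ψ x ∂μ|
        + |(∫ x, F x * ψ x ∂μ) - ∫ x, F x * φ x ∂μ| := by
          have := abs_sub_le (∫ x, pi x ((k:ℝ) • x) * φ x ∂μ)
            (∫ x, pi x ((k:ℝ) • x) * ψ x ∂μ) (∫ x, F x * φ x ∂μ)
          have h2 := abs_sub_le (∫ x, pi x ((k:ℝ) • x) * ψ x ∂μ)
            (∫ x, F x * ψ x ∂μ) (∫ x, F x * φ x ∂μ)
          linarith
    _ < ε/4 + ε/2 + ε/4 := by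
        have := step1; have := step3; have := step2
        linarith [step1, step2, step3]
    _ = ε := by ring
end
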